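/- arXiv:2004.06710 — 4 statements merged into one kernel-verified Lean document; each statement's English description precedes it below -/
import Mathlib

section
/- The halved Farey graph and the Farey graph are minor-equivalent, i.e., each is a minor of the other. -/
open SimpleGraph

universe u v

/-! ### Basic connectivity notions -/

/-- The edge set `F` separates `a` from `b` in `G`: every `a`–`b` walk uses an edge of `F`. -/
def EdgeSeparates {V : Type u} (G : SimpleGraph V) (F : Set (Sym2 V)) (a b : V) : Prop :=
  ∀ p : G.Walk a b, ∃ e ∈ p.edges, e ∈ F

/-- `a` and `b` are finitely separable in `G`: some finite edge set separates them. -/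
def FinSep {V : Type u} (G : SimpleGraph V) (a b : V) : Prop :=
  ∃ F : Set (Sym2 V), F.Finite ∧ EdgeSeparates G F a b

/-- `G` is infinitely edge-connected: it has at least two vertices and no finite set of
edges separates any two distinct vertices. -/
def InfEdgeConnected {V : Type u} (G : SimpleGraph V) : Prop :=
  Nontrivial V ∧ ∀ a b : V, a ≠ b → ¬ FinSep G a b

/-- The vertex set `S` separates `a` from `b`: `a, b ∉ S` and every `a`–`b` walk meets `S`. -/
def VSeparates {V : Type u} (G : SimpleGraph V) (S : Set V) (a b : V) : Prop :=
  a ∉ S ∧ b ∉ S ∧ ∀ p : G.Walk a b, ∃ z ∈ p.support, z ∈ S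

/-! ### Minors -/

/-- `br` is a minor model of `H` in `G`: the branch sets `br w` are nonempty, pairwise
disjoint, connected in `G`, and edges of `H` are witnessed by `G`-edges between branch sets. -/
def IsMinorModel {V : Type u} {W : Type v} (G : SimpleGraph V) (H : SimpleGraph W)
    (br : W → Set V) : Prop :=
  (∀ w, (br w).Nonempty) ∧ (∀ w, (G.induce (br w)).Connected) ∧
    (∀ w w' : W, w ≠ w' → Disjoint (br w) (br w')) ∧
    (∀ w w' : W, H.Adj w w' → ∃ a ∈ br w, ∃ b ∈ br w', G.Adj a b)

/-- `H` is a minor of `G`. -/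
def HasMinor {V : Type u} {W : Type v} (G : SimpleGraph V) (H : SimpleGraph W) : Prop :=
  ∃ br : W → Set V, IsMinorModel G H br

/-- `G` and `H` are minor-equivalent: each is a minor of the other. -/
def MinorEquiv {V : Type u} {W : Type v} (G : SimpleGraph V) (H : SimpleGraph W) : Prop :=
  HasMinor G H ∧ HasMinor H G

/-- `H` is a topological minor of `G`: there are branch vertices (given by the injection `f`)
and internally disjoint paths in `G` joining them, one for each edge of `H`, together forming
a subdivision of `H` inside `G`. -/
def IsTopMinor {V : Type u} {W : Type v} (G : SimpleGraph V) (H : SimpleGraph W) : Prop :=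
  ∃ f : W → V, Function.Injective f ∧
    ∃ p : ∀ ⦃x y : W⦄, H.Adj x y → G.Walk (f x) (f y),
      (∀ ⦃x y : W⦄ (h : H.Adj x y), (p h).IsPath) ∧
      (∀ ⦃x y : W⦄ (h : H.Adj x y), ∀ w : W, f w ∈ (p h).support → w = x ∨ w = y) ∧
      (∀ ⦃x y x' y' : W⦄ (h : H.Adj x y) (h' : H.Adj x' y'), s(x, y) ≠ s(x', y') →
        ∀ z : V, z ∈ (p h).support → z ∈ (p h').support →
          (z = f x ∨ z = f y) ∧ (z = f x' ∨ z = f y'))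

/-! ### The Farey graph, the halved Farey graph, `T_ℵ₀ * t` and the binary tree -/

/-- The Farey graph, on vertex set `ℚ ∪ {∞}` (with `none` playing the role of `∞ = 1/0`):
two rationals `a/b` and `c/d` in lowest terms are adjacent iff `ad - cb = ±1`. -/
def fareyGraph : SimpleGraph (Option ℚ) where
  Adj x y :=
    match x, y with
    | some q, some r => (q.num * (r.den : ℤ) - r.num * (q.den : ℤ)).natAbs = 1
    | some q, none => q.den = 1
    | none, some r => r.den = 1
    | none, none => False
  symm := by
    constructor
    rintro (_ | q) (_ | r) h
    · exact h
    · exact h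
    · exact h
    · simp only at h ⊢
      rw [← neg_sub, Int.natAbs_neg] at h
      exact h
  loopless := by
    constructor
    rintro (_ | q) h
    · exact h
    · simp at h

/-- The `ℵ₀`-regular tree, realised on finite sequences of naturals, a vertex being
adjacent precisely to its parent and to its infinitely many children. -/
def TAleph0 : SimpleGraph (List ℕ) where
  Adj x y := (∃ n, x = n :: y) ∨ (∃ n, y = n :: x)
  symm := by
    constructor
    rintro x y (h | h)
    · exact Or.inr h
    · exact Or.inl h
  loopless := by
    constructor
    rintro x (⟨n, h⟩ | ⟨n, h⟩) <;> exact List.cons_ne_self n x h.symm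

/-- The graph `T_ℵ₀ * t`: the `ℵ₀`-regular tree together with one additional vertex
(`none`) joined to all of its vertices. -/
def TAleph0Star : SimpleGraph (Option (List ℕ)) where
  Adj x y :=
    match x, y with
    | none, none => False
    | none, some _ => True
    | some _, none => True
    | some a, some b => TAleph0.Adj a b
  symm := by
    constructor
    rintro (_ | a) (_ | b) h
    · exact h
    · trivial
    · trivial
    · exact TAleph0.symm.symm _ _ h
  loopless := by
    constructor
    rintro (_ | a) h
    · exact h
    · exact TAleph0.loopless.irrefl a h

/-- The infinite binary tree, realised on finite sequences of booleans, a vertex being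
adjacent precisely to its parent and to its two children. -/
def binaryTree : SimpleGraph (List Bool) where
  Adj x y := (∃ b, x = b :: y) ∨ (∃ b, y = b :: x)
  symm := by
    constructor
    rintro x y (h | h)
    · exact Or.inr h
    · exact Or.inl h
  loopless := by
    constructor
    rintro x (⟨b, h⟩ | ⟨b, h⟩) <;> exact List.cons_ne_self b x h.symm

/-- The two original endvertices of the blue edge to which the vertex recursively created
for a binary string was joined when it was created.  The two initial vertices of `F̌₀` are
`Sum.inl true` and `Sum.inl false`; the vertex created for the string `s` is `Sum.inr s`,
its two children being `false :: s` and `true :: s`. -/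
def hfEnds : List Bool → (Bool ⊕ List Bool) × (Bool ⊕ List Bool)
  | [] => (Sum.inl true, Sum.inl false)
  | (false :: s) => (Sum.inr s, (hfEnds s).1)
  | (true :: s) => (Sum.inr s, (hfEnds s).2)

/-- The halved Farey graph `F̌ = ⋃ₙ F̌ₙ`. -/
def halvedFareyGraph : SimpleGraph (Bool ⊕ List Bool) where
  Adj x y := x ≠ y ∧
    ((x = Sum.inl true ∧ y = Sum.inl false) ∨ (y = Sum.inl true ∧ x = Sum.inl false) ∨
      (∃ s, x = Sum.inr s ∧ (y = (hfEnds s).1 ∨ y = (hfEnds s).2)) ∨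
      (∃ s, y = Sum.inr s ∧ (x = (hfEnds s).1 ∨ x = (hfEnds s).2)))
  symm := by
    constructor
    rintro x y ⟨hne, h⟩
    refine ⟨hne.symm, ?_⟩
    rcases h with h | h | h | h
    · exact Or.inr (Or.inl h)
    · exact Or.inl h
    · exact Or.inr (Or.inr (Or.inr h))
    · exact Or.inr (Or.inr (Or.inl h))
  loopless := by constructor; rintro x ⟨hne, -⟩; exact hne rfl

/-! ### Spanning trees, bonds and separations -/

/-- The fundamental cut of the edge `ab` of a spanning tree `T` of `G`: the set of edges
of `G` joining the two components of `T - ab`. -/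
def FundCut {V : Type u} (G T : SimpleGraph V) (a b : V) : Set (Sym2 V) :=
  {e | e ∈ G.edgeSet ∧ ∃ x y : V, e = s(x, y) ∧
    (T.deleteEdges {s(a, b)}).Reachable a x ∧ (T.deleteEdges {s(a, b)}).Reachable b y}

/-- `T` is a finitely separating spanning tree of `G`: a spanning tree all of whose
fundamental cuts are finite. -/
def IsFinSepSpanningTree {V : Type u} (G T : SimpleGraph V) : Prop :=
  T ≤ G ∧ T.IsTree ∧ ∀ a b : V, T.Adj a b → (FundCut G T a b).Finite

/-- The set of edges of `G` between the vertex sets `A` and `B`. -/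
def cutEdgesBetween {V : Type u} (G : SimpleGraph V) (A B : Set V) : Set (Sym2 V) :=
  {e | ∃ a ∈ A, ∃ b ∈ B, G.Adj a b ∧ e = s(a, b)}

/-- `(A, B)` is an orientation of an element of `B_ℵ₀(G)`: a bipartition of `V(G)` whose
cut is a finite bond, i.e. is nonempty and finite with both sides connected. -/
def IsFinBondOrientation {V : Type u} (G : SimpleGraph V) (A B : Set V) : Prop :=
  A ∪ B = Set.univ ∧ Disjoint A B ∧
    (cutEdgesBetween G A B).Nonempty ∧ (cutEdgesBetween G A B).Finite ∧
    (G.induce A).Connected ∧ (G.induce B).Connected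

/-! ### The quotient graph `G̃` by finite inseparability -/

/-- The class of all vertices not finitely separable from `x`. -/
def ncls {V : Type u} (G : SimpleGraph V) (x : V) : Set V := {y | ¬ FinSep G x y}

/-- The vertex classes of `G̃`. -/
def ClassOf {V : Type u} (G : SimpleGraph V) : Type u := {X : Set V // ∃ x, X = ncls G x}

/-- The quotient graph `G̃` on the classes of pairwise not finitely separable vertices;
two distinct classes are adjacent iff `G` has an edge between them. -/
def tildeGraph {V : Type u} (G : SimpleGraph V) : SimpleGraph (ClassOf G) where
  Adj X Y := X ≠ Y ∧ ∃ a ∈ X.1, ∃ b ∈ Y.1, G.Adj a b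
  symm := by
    constructor
    rintro X Y ⟨hne, a, ha, b, hb, hab⟩
    exact ⟨hne.symm, b, hb, a, ha, hab.symm⟩
  loopless := by constructor; rintro X ⟨hne, -⟩; exact hne rfl

/-- `C` is (the vertex set of) a connected component of `G - u - v`. -/
def IsCompOf {V : Type u} (G : SimpleGraph V) (u v : V) (C : Set V) : Prop :=
  u ∉ C ∧ v ∉ C ∧ (G.induce C).Connected ∧
    ∀ x, x ∉ C → x ≠ u → x ≠ v → ∀ c ∈ C, ¬ G.Adj c x

/-! ### Arrows, footballs, muscles and plows -/

/-- `A` is an arrow from `u` to `v`: it arises from `u` and `v` by disjointly adding an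
infinitely edge-connected payload `H` (here: everything except `u` and `v`), adding a
single `u`–`H` edge `u h`, and adding infinitely many `v`–`(H - h)` edges. -/
def IsArrow {W : Type u} (A : SimpleGraph W) (u v : W) : Prop :=
  u ≠ v ∧
    ∃ h : W, h ≠ u ∧ h ≠ v ∧
      (∀ w, A.Adj u w ↔ w = h) ∧
      {w | A.Adj v w}.Infinite ∧
      (∀ w, A.Adj v w → w ≠ u ∧ w ≠ h) ∧
      InfEdgeConnected (A.induce {w | w ≠ u ∧ w ≠ v})

/-- `B` is an arrow barrage from `u` to `v`: a union of countably infinitely many arrows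
from `u` to `v` which pairwise meet precisely in `u` and `v`. -/
def IsArrowBarrage {W : Type u} (B : SimpleGraph W) (u v : W) : Prop :=
  u ≠ v ∧ ¬ B.Adj u v ∧
    ∃ P : ℕ → Set W,
      (∀ n, u ∉ P n ∧ v ∉ P n) ∧
      (∀ n m, n ≠ m → Disjoint (P n) (P m)) ∧
      (∀ w : W, w ≠ u → w ≠ v → ∃ n, w ∈ P n) ∧
      (∀ n m, n ≠ m → ∀ a ∈ P n, ∀ b ∈ P m, ¬ B.Adj a b) ∧
      (∀ n, IsArrow (B.induce (P n ∪ {u, v}))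
        ⟨u, by simp⟩ ⟨v, by simp⟩)

/-- `G` contains an arrow barrage minor from `x` to `y`: the branch set of the nock
contains `x` and the branch set of the head contains `y`. -/
def HasArrowBarrageMinorFromTo {V : Type u} (G : SimpleGraph V) (x y : V) : Prop :=
  ∃ (W : Type u) (B : SimpleGraph W) (n h : W) (br : W → Set V),
    IsArrowBarrage B n h ∧ IsMinorModel G B br ∧ x ∈ br n ∧ y ∈ br h

/-- `F` is a football with endvertices `u` and `v`: `F` is infinitely edge-connected and
so is `F - u - v`. -/
def IsFootball {W : Type u} (F : SimpleGraph W) (u v : W) : Prop :=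
  u ≠ v ∧ InfEdgeConnected F ∧ InfEdgeConnected (F.induce {w | w ≠ u ∧ w ≠ v})

/-- `G` contains a football minor connecting `x` and `y`. -/
def HasFootballMinorConnecting {V : Type u} (G : SimpleGraph V) (x y : V) : Prop :=
  ∃ (W : Type u) (F : SimpleGraph W) (u v : W) (br : W → Set V),
    IsFootball F u v ∧ IsMinorModel G F br ∧
      ((x ∈ br u ∧ y ∈ br v) ∨ (x ∈ br v ∧ y ∈ br u))

/-- `M` is a muscle with endvertices `u` and `v`: it arises from `u` and `v` by disjointly
adding an infinitely edge-connected graph `H` (everything except `u` and `v`) and adding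
one `u`–`H` edge `u x` and one `v`–`H` edge `v y` with `x ≠ y`. -/
def IsMuscle {W : Type u} (M : SimpleGraph W) (u v : W) : Prop :=
  u ≠ v ∧
    ∃ x y : W, x ≠ u ∧ x ≠ v ∧ y ≠ u ∧ y ≠ v ∧ x ≠ y ∧
      (∀ w, M.Adj u w ↔ w = x) ∧ (∀ w, M.Adj v w ↔ w = y) ∧
      InfEdgeConnected (M.induce {w | w ≠ u ∧ w ≠ v})

/-- `B` is a muscle barrage with endvertices `u` and `v`. -/
def IsMuscleBarrage {W : Type u} (B : SimpleGraph W) (u v : W) : Prop :=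
  u ≠ v ∧ ¬ B.Adj u v ∧
    ∃ P : ℕ → Set W,
      (∀ n, u ∉ P n ∧ v ∉ P n) ∧
      (∀ n m, n ≠ m → Disjoint (P n) (P m)) ∧
      (∀ w : W, w ≠ u → w ≠ v → ∃ n, w ∈ P n) ∧
      (∀ n m, n ≠ m → ∀ a ∈ P n, ∀ b ∈ P m, ¬ B.Adj a b) ∧
      (∀ n, IsMuscle (B.induce (P n ∪ {u, v}))
        ⟨u, by simp⟩ ⟨v, by simp⟩)

/-- `G` contains a muscle barrage minor connecting `x` and `y`. -/
def HasMuscleBarrageMinorConnecting {V : Type u} (G : SimpleGraph V) (x y : V) : Prop :=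
  ∃ (W : Type u) (B : SimpleGraph W) (u v : W) (br : W → Set V),
    IsMuscleBarrage B u v ∧ IsMinorModel G B br ∧
      ((x ∈ br u ∧ y ∈ br v) ∨ (x ∈ br v ∧ y ∈ br u))

/-- `P` is a plow with endvertices `u`, `v` and head `h`: the union of two half-plows
(infinitely edge-connected graphs containing the edges `u h` resp. `h v`) meeting
precisely in `h`. -/
def IsPlow {W : Type u} (P : SimpleGraph W) (u v h : W) : Prop :=
  u ≠ v ∧ u ≠ h ∧ v ≠ h ∧
    ∃ S T : Set W, S ∪ T = Set.univ ∧ S ∩ T = {h} ∧ u ∈ S ∧ v ∈ T ∧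
      (∀ a b : W, P.Adj a b → (a ∈ S ∧ b ∈ S) ∨ (a ∈ T ∧ b ∈ T)) ∧
      InfEdgeConnected (P.induce S) ∧ InfEdgeConnected (P.induce T) ∧
      P.Adj u h ∧ P.Adj h v

/-- `G` contains a plow minor connecting `x` and `y`. -/
def HasPlowMinorConnecting {V : Type u} (G : SimpleGraph V) (x y : V) : Prop :=
  ∃ (W : Type u) (P : SimpleGraph W) (u v h : W) (br : W → Set V),
    IsPlow P u v h ∧ IsMinorModel G P br ∧
      ((x ∈ br u ∧ y ∈ br v) ∨ (x ∈ br v ∧ y ∈ br u))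

/-! ### Recursive pruning -/

/-- One pruning step: remove from `S` all vertices whose up-closure within `S`
(w.r.t. the tree order `r`) is a chain. -/
def pruneStep {V : Type u} (r : V → V → Prop) (S : Set V) : Set V :=
  {t | t ∈ S ∧ ¬ IsChain r {s | s ∈ S ∧ r t s}}

/-- The set of vertices still unlabelled at stage `α` of the recursive pruning. -/
noncomputable def unlabelledAt {V : Type u} (r : V → V → Prop) : Ordinal.{u} → Set V :=
  WellFounded.fix Ordinal.lt_wf
    (fun α ih => {t | ∀ β, ∀ hβ : β < α, t ∈ pruneStep r (ih β hβ)})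

/-- The tree order `r` is recursively prunable: every vertex eventually gets labelled. -/
def RecursivelyPrunable {V : Type u} (r : V → V → Prop) : Prop :=
  ∃ α : Ordinal.{u}, unlabelledAt r α = ∅

/-- The tree order of the tree `T` rooted in `root`: `x ≤ y` iff `x` lies on the
(unique) `root`–`y` path of `T`. -/
def treeLE {V : Type u} (T : SimpleGraph V) (root : V) (x y : V) : Prop :=
  ∀ p : T.Walk root y, p.IsPath → x ∈ p.support

/-! ### Contracting a vertex set -/

/-- The graph `G[W]/X` obtained from the subgraph of `G` induced on `W` by contracting
the vertex set `X` to a single new vertex (`none`); the contracted vertex is adjacent to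
precisely those vertices of `W \ X` that send an edge to `X` in `G[W]`. -/
def contractIn {V : Type u} (G : SimpleGraph V) (W X : Set V) :
    SimpleGraph (Option ↥(W \ X)) where
  Adj a b :=
    match a, b with
    | some a, some b => G.Adj a.1 b.1
    | some a, none => ∃ x ∈ W ∩ X, G.Adj a.1 x
    | none, some b => ∃ x ∈ W ∩ X, G.Adj x b.1
    | none, none => False
  symm := by
    constructor
    rintro (_ | a) (_ | b) h
    · exact h
    · obtain ⟨x, hx, hadj⟩ := h
      exact ⟨x, hx, hadj.symm⟩
    · obtain ⟨x, hx, hadj⟩ := h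
      exact ⟨x, hx, hadj.symm⟩
    · exact h.symm
  loopless := by
    constructor
    rintro (_ | a) h
    · exact h
    · exact G.loopless.irrefl _ h

/-! ### Abstract graphs with vertex sets (as subgraphs of the complete ambient graph) -/

/-- A minor model of the abstract graph `H` in the abstract graph `G` (both given as
subgraphs of the complete graph on the ambient vertex type `U`). -/
def AbsMinorModel {U : Type u} (G H : (⊤ : SimpleGraph U).Subgraph) (br : U → Set U) : Prop :=
  (∀ h ∈ H.verts, br h ⊆ G.verts) ∧
    (∀ h ∈ H.verts, (G.induce (br h)).Connected) ∧
    (∀ h ∈ H.verts, ∀ h' ∈ H.verts, h ≠ h' → Disjoint (br h) (br h')) ∧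
    (∀ h h' : U, H.Adj h h' → ∃ a ∈ br h, ∃ b ∈ br h', G.Adj a b)

/-- A minor-map `φ = (D, f) : G ≽ H`: `D ⊆ V(G)`, `f` maps `D` onto `V(H)`, and the
fibres of `f` over the vertices of `H` form the branch sets of a minor model of `H` in `G`. -/
def AbsMinorMap {U : Type u} (G H : (⊤ : SimpleGraph U).Subgraph) (D : Set U) (f : U → U) :
    Prop :=
  D ⊆ G.verts ∧ (∀ x ∈ D, f x ∈ H.verts) ∧ (∀ h ∈ H.verts, ∃ x ∈ D, f x = h) ∧
    AbsMinorModel G H (fun h => {x | x ∈ D ∧ f x = h})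



namespace FareyAux

abbrev Pair := ℕ × ℕ

def med (e : Pair × Pair) : Pair := (e.1.1 + e.2.1, e.1.2 + e.2.2)

def ends : List Bool → Pair × Pair
  | [] => ((1,0),(0,1))
  | false :: s => (med (ends s), (ends s).1)
  | true :: s => (med (ends s), (ends s).2)

def vert (s : List Bool) : Pair := med (ends s)

def act : Bool → Pair → Pair
  | false, p => (p.1 + p.2, p.1)
  | true, p => (p.1, p.1 + p.2)

def Det (p q : Pair) : ℤ := (p.1 : ℤ) * q.2 - (q.1 : ℤ) * p.2

lemma ends_sums (s : List Bool) :
    1 ≤ (ends s).1.1 + (ends s).2.1 ∧ 1 ≤ (ends s).1.2 + (ends s).2.2 := by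
  induction s with
  | nil => simp [ends]
  | cons b s ih => cases b <;> simp [ends, med] <;> omega

lemma vert_pos (s : List Bool) : 1 ≤ (vert s).1 ∧ 1 ≤ (vert s).2 := by
  have := ends_sums s
  simp [vert, med]
  omega

lemma det_med_left (e : Pair × Pair) : Det (med e) e.1 = -(Det e.1 e.2) := by
  simp [Det, med]; push_cast; ring

lemma det_med_right (e : Pair × Pair) : Det (med e) e.2 = Det e.1 e.2 := by
  simp [Det, med]; push_cast; ring

lemma det_ends (s : List Bool) :
    Det (ends s).1 (ends s).2 = 1 ∨ Det (ends s).1 (ends s).2 = -1 := by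
  induction s with
  | nil => left; rfl
  | cons b s ih =>
    cases b
    · have h := det_med_left (ends s)
      simp only [ends]
      omega
    · have h := det_med_right (ends s)
      simp only [ends]
      omega

lemma coprime_of_det {p q : Pair} (h : Det p q = 1 ∨ Det p q = -1) :
    Nat.Coprime p.1 p.2 := by
  have h1 : (Nat.gcd p.1 p.2 : ℤ) ∣ Det p q := by
    apply dvd_sub
    · exact Dvd.dvd.mul_right (Int.natCast_dvd_natCast.2 (Nat.gcd_dvd_left _ _)) _
    · exact Dvd.dvd.mul_left (Int.natCast_dvd_natCast.2 (Nat.gcd_dvd_right _ _)) _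
  have h2 : (Nat.gcd p.1 p.2 : ℤ) ∣ 1 := by
    rcases h with h | h
    · rwa [h] at h1
    · rw [h] at h1; exact (dvd_neg).1 h1
  have h3 : Nat.gcd p.1 p.2 ∣ 1 := by exact_mod_cast h2
  exact Nat.eq_one_of_dvd_one h3


lemma ends_app (s : List Bool) (c : Bool) :
    ends (s ++ [c]) = (act c (ends s).1, act c (ends s).2) := by
  induction s with
  | nil => cases c <;> rfl
  | cons b s ih =>
    cases b <;> cases c <;>
      simp [List.cons_append, ends, ih, act, med, Prod.ext_iff] <;> omega

lemma vert_app (s : List Bool) (c : Bool) :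
    vert (s ++ [c]) = act c (vert s) := by
  cases c <;>
    simp [vert, ends_app, act, med, Prod.ext_iff] <;> omega

def path (p : Pair) : List Bool :=
  if h : 0 < p.2 ∧ p.2 < p.1 then path (p.2, p.1 - p.2) ++ [false]
  else if h' : 0 < p.1 ∧ p.1 < p.2 then path (p.1, p.2 - p.1) ++ [true]
  else []
termination_by p.1 + p.2
decreasing_by
  all_goals omega

lemma path_false {p : Pair} (h1 : 0 < p.2) (h2 : p.2 < p.1) :
    path p = path (p.2, p.1 - p.2) ++ [false] := by
  rw [path]; simp [h1, h2]

lemma path_true {p : Pair} (h1 : 0 < p.1) (h2 : p.1 < p.2) :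
    path p = path (p.1, p.2 - p.1) ++ [true] := by
  rw [path]
  have : ¬ (0 < p.2 ∧ p.2 < p.1) := by omega
  simp [this, h1, h2]

lemma path_diag : path (1, 1) = [] := by
  rw [path]; norm_num

lemma gcd_sub_aux {a b : ℕ} (h : b ≤ a) : Nat.gcd b (a - b) = Nat.gcd b a := by
  conv_rhs => rw [← Nat.sub_add_cancel h]
  exact (Nat.gcd_add_self_right b (a - b)).symm

lemma vert_path : ∀ N p, p.1 + p.2 ≤ N → Nat.Coprime p.1 p.2 →
    1 ≤ p.1 → 1 ≤ p.2 → vert (path p) = p := by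
  intro N
  induction N with
  | zero => intro p h _ h1 h2; omega
  | succ N ih =>
    intro p hN hcop h1 h2
    rcases lt_trichotomy p.1 p.2 with hlt | heq | hgt
    · rw [path_true h1 hlt, vert_app]
      have hc : Nat.Coprime p.1 (p.2 - p.1) := by
        unfold Nat.Coprime at *
        rw [gcd_sub_aux (le_of_lt hlt)]; exact hcop
      rw [ih (p.1, p.2 - p.1) (by omega) hc (by omega) (by omega)]
      simp [act, Prod.ext_iff]; omega
    · have : p.1 = 1 := by
        have := hcop
        unfold Nat.Coprime at this
        rw [← heq] at this
        simpa using this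
      have hp : p = (1, 1) := by
        apply Prod.ext <;> omega
      rw [hp, path_diag]; rfl
    · rw [path_false h2 hgt, vert_app]
      have hc : Nat.Coprime p.2 (p.1 - p.2) := by
        unfold Nat.Coprime at *
        rw [gcd_sub_aux (le_of_lt hgt)]
        exact Nat.coprime_comm.1 hcop
      rw [ih (p.2, p.1 - p.2) (by omega) hc (by omega) (by omega)]
      simp [act, Prod.ext_iff]; omega

lemma vert_path' {p : Pair} (hcop : Nat.Coprime p.1 p.2)
    (h1 : 1 ≤ p.1) (h2 : 1 ≤ p.2) : vert (path p) = p :=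
  vert_path (p.1 + p.2) p le_rfl hcop h1 h2

lemma path_vert (s : List Bool) : path (vert s) = s := by
  induction s using List.reverseRecOn with
  | nil => exact path_diag
  | append_singleton t c ih =>
    have hv := vert_pos t
    rw [vert_app]
    cases c
    · have h1 : act false (vert t) = ((vert t).1 + (vert t).2, (vert t).1) := rfl
      rw [h1, path_false (by simp; omega) (by simp; omega)]
      have h2 : (((vert t).1 + (vert t).2, (vert t).1) : Pair).2 = (vert t).1 := rfl
      have h3 : ((((vert t).1 + (vert t).2, (vert t).1) : Pair).2,
          (((vert t).1 + (vert t).2, (vert t).1) : Pair).1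
            - (((vert t).1 + (vert t).2, (vert t).1) : Pair).2) = vert t := by
        apply Prod.ext <;> simp
      rw [h3, ih]
    · have h1 : act true (vert t) = ((vert t).1, (vert t).1 + (vert t).2) := rfl
      rw [h1, path_true (by simp; omega) (by simp; omega)]
      have h3 : ((((vert t).1, (vert t).1 + (vert t).2) : Pair).1,
          (((vert t).1, (vert t).1 + (vert t).2) : Pair).2
            - (((vert t).1, (vert t).1 + (vert t).2) : Pair).1) = vert t := by
        apply Prod.ext <;> simp
      rw [h3, ih]

lemma vert_inj : Function.Injective vert := by
  intro s t h
  rw [← path_vert s, ← path_vert t, h]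


lemma det_act (c : Bool) (u v : Pair) :
    Det (act c u) (act c v) = if c then Det u v else -(Det u v) := by
  cases c <;> simp [act, Det] <;> push_cast <;> ring

lemma path_false' {a b : ℕ} (h1 : 0 < b) (h2 : b < a) :
    path (a, b) = path (b, a - b) ++ [false] := path_false (p := (a,b)) h1 h2

lemma path_true' {a b : ℕ} (h1 : 0 < a) (h2 : a < b) :
    path (a, b) = path (a, b - a) ++ [true] := path_true (p := (a,b)) h1 h2

lemma L0 : ∀ b : ℕ, 1 ≤ b → (ends (path (1, b))).2 = (0, 1) := by
  intro b
  induction b with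
  | zero => omega
  | succ b ih =>
    intro _
    rcases Nat.lt_or_ge 1 (b + 1) with h | h
    · rw [path_true' (by norm_num) h, ends_app]
      have h2 : b + 1 - 1 = b := by omega
      rw [h2, ih (by omega)]
      rfl
    · have : b = 0 := by omega
      subst this
      rw [path_diag]; rfl

lemma Linf : ∀ a : ℕ, 1 ≤ a →
    (ends (path (a, 1))).1 = (1, 0) ∨ (ends (path (a, 1))).2 = (1, 0) := by
  intro a ha
  rcases Nat.lt_or_ge 1 a with h | h
  · right
    rw [path_false' (by norm_num) h, ends_app, L0 (a - 1) (by omega)]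
    rfl
  · left
    have : a = 1 := by omega
    subst this
    rw [path_diag]; rfl

/-- The key lattice lemma: Farey-adjacent valid pairs are tree-adjacent. -/
lemma main_lattice : ∀ N : ℕ, ∀ p q : Pair, p.1 + p.2 + q.1 + q.2 ≤ N →
    Nat.Coprime p.1 p.2 → Nat.Coprime q.1 q.2 →
    1 ≤ p.1 → 1 ≤ p.2 → 1 ≤ q.1 → 1 ≤ q.2 →
    (Det p q = 1 ∨ Det p q = -1) →
    (p = (ends (path q)).1 ∨ p = (ends (path q)).2) ∨
    (q = (ends (path p)).1 ∨ q = (ends (path p)).2) := by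
  intro N
  induction N with
  | zero => intro p q h; omega
  | succ N ih =>
    intro p q hN hcp hcq hp1 hp2 hq1 hq2 hdet
    obtain ⟨a, b⟩ := p
    obtain ⟨c, d⟩ := q
    simp only at hp1 hp2 hq1 hq2
    rcases lt_trichotomy a b with hab | hab | hab
    · rcases lt_trichotomy c d with hcd | hcd | hcd
      · -- both true-children
        have e1 : act true ((a:ℕ), b - a) = (a, b) := by
          simp [act, Prod.ext_iff]; omega
        have e2 : act true ((c:ℕ), d - c) = (c, d) := by
          simp [act, Prod.ext_iff]; omega
        have hda := det_act true ((a:ℕ), b - a) ((c:ℕ), d - c)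
        rw [e1, e2] at hda
        simp only [if_true] at hda
        have hdet' : Det ((a:ℕ), b - a) ((c:ℕ), d - c) = 1 ∨
            Det ((a:ℕ), b - a) ((c:ℕ), d - c) = -1 := by
          rw [← hda]; exact hdet
        have hrec := ih ((a:ℕ), b - a) ((c:ℕ), d - c) (by simp at hN ⊢; omega)
          (by unfold Nat.Coprime at *; rw [gcd_sub_aux (le_of_lt hab)]; exact hcp)
          (by unfold Nat.Coprime at *; rw [gcd_sub_aux (le_of_lt hcd)]; exact hcq)
          (by omega) (by simp; omega) (by omega) (by simp; omega) hdet'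
        rw [path_true' hp1 hab, path_true' hq1 hcd]
        simp only [ends_app]
        rcases hrec with (h | h) | (h | h)
        · left; left; rw [← e1, h]
        · left; right; rw [← e1, h]
        · right; left; rw [← e2, h]
        · right; right; rw [← e2, h]
      · -- q = (1,1)
        have hc1 : c = 1 := by
          unfold Nat.Coprime at hcq; rw [← hcd] at hcq; simp at hcq; omega
        have hd1 : d = 1 := by omega
        subst hc1; subst hd1
        have hba : b = a + 1 := by
          simp only [Det] at hdet; push_cast at hdet; omega
        subst hba
        right
        rw [path_true' hp1 hab]
        simp only [ends_app]
        have h2 : a + 1 - a = 1 := by omega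
        rw [h2]
        rcases Linf a (by omega) with h | h
        · left; rw [h]; rfl
        · right; rw [h]; rfl
      · -- a < b, c > d : impossible
        exfalso
        have h1 : ((d:ℤ) + 1) * ((a:ℤ) + 1) ≤ (c:ℤ) * (b:ℤ) := by
          apply mul_le_mul (by exact_mod_cast hcd) (by exact_mod_cast hab)
            (by positivity) (by positivity)
        have hd2 : (a:ℤ) * d - c * b = 1 ∨ (a:ℤ) * d - c * b = -1 := by
          simpa [Det] using hdet
        have ha' : (1:ℤ) ≤ a := by exact_mod_cast hp1
        have hd' : (1:ℤ) ≤ d := by exact_mod_cast hq2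
        rcases hd2 with h | h <;> nlinarith
    · -- p = (1,1)
      have ha1 : a = 1 := by
        unfold Nat.Coprime at hcp; rw [← hab] at hcp; simp at hcp; omega
      have hb1 : b = 1 := by omega
      subst ha1; subst hb1
      rcases lt_trichotomy c d with hcd | hcd | hcd
      · have hdc : d = c + 1 := by
          simp only [Det] at hdet; push_cast at hdet; omega
        subst hdc
        left
        rw [path_true' hq1 hcd]
        simp only [ends_app]
        have h2 : c + 1 - c = 1 := by omega
        rw [h2]
        rcases Linf c (by omega) with h | h
        · left; rw [h]; rfl
        · right; rw [h]; rfl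
      · exfalso
        have hc1 : c = 1 := by
          unfold Nat.Coprime at hcq; rw [← hcd] at hcq; simp at hcq; omega
        have hd1 : d = 1 := by omega
        subst hc1; subst hd1
        simp [Det] at hdet
      · have hdc : c = d + 1 := by
          simp only [Det] at hdet; push_cast at hdet; omega
        subst hdc
        left
        rw [path_false' hq2 hcd]
        simp only [ends_app]
        have h2 : d + 1 - d = 1 := by omega
        rw [h2]
        rcases Linf d (by omega) with h | h
        · left; rw [h]; rfl
        · right; rw [h]; rfl
    · rcases lt_trichotomy c d with hcd | hcd | hcd
      · -- a > b, c < d : impossible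
        exfalso
        have h1 : ((b:ℤ) + 1) * ((c:ℤ) + 1) ≤ (a:ℤ) * (d:ℤ) := by
          apply mul_le_mul (by exact_mod_cast hab) (by exact_mod_cast hcd)
            (by positivity) (by positivity)
        have hd2 : (a:ℤ) * d - c * b = 1 ∨ (a:ℤ) * d - c * b = -1 := by
          simpa [Det] using hdet
        have hb' : (1:ℤ) ≤ b := by exact_mod_cast hp2
        have hc' : (1:ℤ) ≤ c := by exact_mod_cast hq1
        rcases hd2 with h | h <;> nlinarith
      · -- q = (1,1)
        have hc1 : c = 1 := by
          unfold Nat.Coprime at hcq; rw [← hcd] at hcq; simp at hcq; omega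
        have hd1 : d = 1 := by omega
        subst hc1; subst hd1
        have hba : a = b + 1 := by
          simp only [Det] at hdet; push_cast at hdet; omega
        subst hba
        right
        rw [path_false' hp2 hab]
        simp only [ends_app]
        have h2 : b + 1 - b = 1 := by omega
        rw [h2]
        rcases Linf b (by omega) with h | h
        · left; rw [h]; rfl
        · right; rw [h]; rfl
      · -- both false-children
        have e1 : act false ((b:ℕ), a - b) = (a, b) := by
          simp [act, Prod.ext_iff]; omega
        have e2 : act false ((d:ℕ), c - d) = (c, d) := by
          simp [act, Prod.ext_iff]; omega
        have hda := det_act false ((b:ℕ), a - b) ((d:ℕ), c - d)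
        rw [e1, e2] at hda
        simp only [Bool.false_eq_true, if_false] at hda
        have hdet' : Det ((b:ℕ), a - b) ((d:ℕ), c - d) = 1 ∨
            Det ((b:ℕ), a - b) ((d:ℕ), c - d) = -1 := by
          omega
        have hrec := ih ((b:ℕ), a - b) ((d:ℕ), c - d) (by simp at hN ⊢; omega)
          (by unfold Nat.Coprime at *; rw [gcd_sub_aux (le_of_lt hab)];
              exact Nat.coprime_comm.1 hcp)
          (by unfold Nat.Coprime at *; rw [gcd_sub_aux (le_of_lt hcd)];
              exact Nat.coprime_comm.1 hcq)
          (by omega) (by simp; omega) (by omega) (by simp; omega) hdet'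
        rw [path_false' hp2 hab, path_false' hq2 hcd]
        simp only [ends_app]
        rcases hrec with (h | h) | (h | h)
        · left; left; rw [← e1, h]
        · left; right; rw [← e1, h]
        · right; left; rw [← e2, h]
        · right; right; rw [← e2, h]


def phi : Bool ⊕ List Bool → Pair
  | .inl true => (1, 0)
  | .inl false => (0, 1)
  | .inr s => vert s

lemma phi_hfEnds (s : List Bool) :
    phi (hfEnds s).1 = (ends s).1 ∧ phi (hfEnds s).2 = (ends s).2 := by
  induction s with
  | nil => exact ⟨rfl, rfl⟩
  | cons b s ih =>
    cases b
    · exact ⟨rfl, ih.1⟩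
    · exact ⟨rfl, ih.2⟩

lemma phi_inv_10 {y : Bool ⊕ List Bool} (h : phi y = (1, 0)) : y = Sum.inl true := by
  rcases y with b | t
  · cases b
    · simp [phi, Prod.ext_iff] at h
    · rfl
  · exfalso; have := vert_pos t; simp [phi, Prod.ext_iff] at h; omega

lemma phi_inv_01 {y : Bool ⊕ List Bool} (h : phi y = (0, 1)) : y = Sum.inl false := by
  rcases y with b | t
  · cases b
    · rfl
    · simp [phi, Prod.ext_iff] at h
  · exfalso; have := vert_pos t; simp [phi, Prod.ext_iff] at h; omega

lemma phi_inv_vert {y : Bool ⊕ List Bool} {t : List Bool} (h : phi y = vert t) :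
    y = Sum.inr t := by
  have hv := vert_pos t
  rcases y with b | u
  · cases b <;> simp [phi, Prod.ext_iff] at h <;> try omega
  · simp only [phi] at h
    rw [vert_inj h]

lemma det_comm (p q : Pair) : Det q p = -(Det p q) := by unfold Det; ring

lemma det_vert_end (s : List Bool) :
    (Det (vert s) (ends s).1 = 1 ∨ Det (vert s) (ends s).1 = -1) ∧
    (Det (vert s) (ends s).2 = 1 ∨ Det (vert s) (ends s).2 = -1) := by
  have h1 := det_med_left (ends s)
  have h2 := det_med_right (ends s)
  have h3 := det_ends s
  unfold vert
  omega

lemma coprime_vert (s : List Bool) : Nat.Coprime (vert s).1 (vert s).2 :=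
  coprime_of_det (det_vert_end s).1

def mkq (p : Pair) : ℚ := (p.1 : ℚ) / (p.2 : ℚ)

lemma mkq_num_den {p : Pair} (hc : Nat.Coprime p.1 p.2) (h2 : 1 ≤ p.2) :
    (mkq p).num = p.1 ∧ (mkq p).den = p.2 := by
  have hb : (0 : ℤ) < (p.2 : ℤ) := by exact_mod_cast h2
  have hcop : ((p.1 : ℤ)).natAbs.Coprime ((p.2 : ℤ)).natAbs := by simpa using hc
  have hn := Rat.num_div_eq_of_coprime hb hcop
  have hd := Rat.den_div_eq_of_coprime hb hcop
  have e1 : ((p.1 : ℤ) : ℚ) = (p.1 : ℚ) := by push_cast; ring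
  have e2 : ((p.2 : ℤ) : ℚ) = (p.2 : ℚ) := by push_cast; ring
  rw [e1, e2] at hn hd
  constructor
  · rw [mkq]; exact hn
  · rw [mkq]; exact_mod_cast hd

lemma vert_num_den (s : List Bool) :
    (mkq (vert s)).num = (vert s).1 ∧ (mkq (vert s)).den = (vert s).2 :=
  mkq_num_den (coprime_vert s) (vert_pos s).2

def fmap : Bool ⊕ List Bool → Option ℚ
  | .inl true => none
  | .inl false => some 0
  | .inr s => some (mkq (vert s))

lemma fmap_inj : Function.Injective fmap := by
  intro x y h
  rcases x with b | s <;> rcases y with c | t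
  · cases b <;> cases c <;> simp [fmap] at h ⊢
  · exfalso
    have hn := (vert_num_den t).1
    have hp := vert_pos t
    cases b <;> simp [fmap] at h
    rw [← h] at hn
    simp at hn
    omega
  · exfalso
    have hn := (vert_num_den s).1
    have hp := vert_pos s
    cases c <;> simp [fmap] at h
    rw [h] at hn
    simp at hn
    omega
  · simp only [fmap, Option.some.injEq] at h
    have h1 := vert_num_den s
    have h2 := vert_num_den t
    rw [h] at h1
    have : vert s = vert t := by
      apply Prod.ext
      · have := h1.1.symm.trans h2.1
        exact_mod_cast this
      · exact h1.2.symm.trans h2.2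
    rw [vert_inj this]

lemma farey_adj_some {q r : ℚ} (h : (q.num * (r.den : ℤ) - r.num * (q.den : ℤ)).natAbs = 1) :
    fareyGraph.Adj (some q) (some r) := h

lemma farey_adj_mkq {s t : List Bool}
    (hdet : Det (vert s) (vert t) = 1 ∨ Det (vert s) (vert t) = -1) :
    fareyGraph.Adj (some (mkq (vert s))) (some (mkq (vert t))) := by
  apply farey_adj_some
  rw [(vert_num_den s).1, (vert_num_den s).2, (vert_num_den t).1, (vert_num_den t).2]
  simp only [Det] at hdet
  omega

lemma farey_adj_none {q : ℚ} (h : q.den = 1) : fareyGraph.Adj none (some q) := h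

lemma adj_some_end {s : List Bool} {y : Bool ⊕ List Bool} {e : Pair}
    (hphi : phi y = e)
    (hdet : Det (vert s) e = 1 ∨ Det (vert s) e = -1)
    (hcase : e = (1, 0) ∨ e = (0, 1) ∨ (1 ≤ e.1 ∧ 1 ≤ e.2)) :
    fareyGraph.Adj (some (mkq (vert s))) (fmap y) := by
  rcases hcase with he | he | he
  · subst he
    rw [phi_inv_10 hphi]
    have hden : (vert s).2 = 1 := by
      simp only [Det] at hdet; push_cast at hdet; omega
    have : (mkq (vert s)).den = 1 := (vert_num_den s).2.trans hden
    exact (farey_adj_none this).symm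
  · subst he
    rw [phi_inv_01 hphi]
    have hnum : (vert s).1 = 1 := by
      simp only [Det] at hdet; push_cast at hdet; omega
    show fareyGraph.Adj (some (mkq (vert s))) (some 0)
    apply farey_adj_some
    rw [(vert_num_den s).1]
    simp [hnum]
  · rcases y with b | t
    · exfalso
      cases b <;> simp [phi, Prod.ext_iff] at hphi <;> omega
    · have hv : vert t = e := hphi
      rw [← hv] at hdet
      exact farey_adj_mkq hdet

lemma ends_cases (s : List Bool) :
    ∀ e, (e = (ends s).1 ∨ e = (ends s).2) →
      e = (1, 0) ∨ e = (0, 1) ∨ (1 ≤ e.1 ∧ 1 ≤ e.2) := by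
  induction s with
  | nil =>
    rintro e (rfl | rfl)
    · left; rfl
    · right; left; rfl
  | cons b s ih =>
    have hm : 1 ≤ (vert s).1 ∧ 1 ≤ (vert s).2 := vert_pos s
    cases b <;> rintro e (rfl | rfl)
    · right; right; exact hm
    · exact ih _ (Or.inl rfl)
    · right; right; exact hm
    · exact ih _ (Or.inr rfl)

/-- Forward adjacency: the halved Farey graph maps into the Farey graph. -/
lemma adj_forward {x y : Bool ⊕ List Bool} (h : halvedFareyGraph.Adj x y) :
    fareyGraph.Adj (fmap x) (fmap y) := by
  obtain ⟨hne, hc⟩ := h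
  rcases hc with ⟨hx, hy⟩ | ⟨hy, hx⟩ | ⟨s, hx, hy⟩ | ⟨s, hy, hx⟩
  · subst hx; subst hy
    exact farey_adj_none rfl
  · subst hx; subst hy
    exact (farey_adj_none rfl).symm
  · subst hx
    have hph := phi_hfEnds s
    have hde := det_vert_end s
    rcases hy with hy | hy <;> subst hy
    · exact adj_some_end hph.1 hde.1 (ends_cases s _ (Or.inl rfl))
    · exact adj_some_end hph.2 hde.2 (ends_cases s _ (Or.inr rfl))
  · subst hy
    have hph := phi_hfEnds s
    have hde := det_vert_end s
    apply SimpleGraph.Adj.symm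
    rcases hx with hx | hx <;> subst hx
    · exact adj_some_end hph.1 hde.1 (ends_cases s _ (Or.inl rfl))
    · exact adj_some_end hph.2 hde.2 (ends_cases s _ (Or.inr rfl))

/-- valid pairs -/
def Valid (p : Pair) : Prop := Nat.Coprime p.1 p.2 ∧ 1 ≤ p.1 ∧ 1 ≤ p.2

lemma vert_path'' {p : Pair} (h : Valid p) : vert (path p) = p :=
  vert_path' h.1 h.2.1 h.2.2

/-- halved-Farey adjacency from an end relation -/
lemma hadj_of_end {t : List Bool} {y : Bool ⊕ List Bool}
    (h : y = (hfEnds t).1 ∨ y = (hfEnds t).2) (hne : Sum.inr t ≠ y) :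
    halvedFareyGraph.Adj (Sum.inr t) y :=
  ⟨hne, Or.inr (Or.inr (Or.inl ⟨t, rfl, h⟩))⟩

lemma hadj_of_det {p q : Pair} (hp : Valid p) (hq : Valid q)
    (hdet : Det p q = 1 ∨ Det p q = -1) :
    halvedFareyGraph.Adj (Sum.inr (path p)) (Sum.inr (path q)) := by
  have hvp := vert_path'' hp
  have hvq := vert_path'' hq
  have hne : p ≠ q := by
    rintro rfl
    simp [Det] at hdet
  have hner : Sum.inr (path p) ≠ (Sum.inr (path q) : Bool ⊕ List Bool) := by
    intro hcon
    apply hne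
    rw [← hvp, ← hvq]
    rw [Sum.inr.injEq] at hcon
    rw [hcon]
  have := main_lattice (p.1 + p.2 + q.1 + q.2) p q le_rfl hp.1 hq.1
    hp.2.1 hp.2.2 hq.2.1 hq.2.2 hdet
  rcases this with (h | h) | (h | h)
  · -- p is an end of path q
    apply SimpleGraph.Adj.symm
    apply hadj_of_end (y := Sum.inr (path p)) _ hner.symm
    left
    have : phi (hfEnds (path q)).1 = vert (path p) := by
      rw [(phi_hfEnds (path q)).1, hvp, ← h]
    exact (phi_inv_vert this).symm
  · apply SimpleGraph.Adj.symm
    apply hadj_of_end (y := Sum.inr (path p)) _ hner.symm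
    right
    have : phi (hfEnds (path q)).2 = vert (path p) := by
      rw [(phi_hfEnds (path q)).2, hvp, ← h]
    exact (phi_inv_vert this).symm
  · apply hadj_of_end _ hner
    left
    have : phi (hfEnds (path p)).1 = vert (path q) := by
      rw [(phi_hfEnds (path p)).1, hvq, ← h]
    exact (phi_inv_vert this).symm
  · apply hadj_of_end _ hner
    right
    have : phi (hfEnds (path p)).2 = vert (path q) := by
      rw [(phi_hfEnds (path p)).2, hvq, ← h]
    exact (phi_inv_vert this).symm

lemma hadj_inf {a : ℕ} (ha : 1 ≤ a) :
    halvedFareyGraph.Adj (Sum.inl true) (Sum.inr (path (a, 1))) := by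
  apply SimpleGraph.Adj.symm
  apply hadj_of_end _ (by simp)
  rcases Linf a ha with h | h
  · left
    have : phi (hfEnds (path (a,1))).1 = (1, 0) := by
      rw [(phi_hfEnds (path (a,1))).1, h]
    exact (phi_inv_10 this).symm
  · right
    have : phi (hfEnds (path (a,1))).2 = (1, 0) := by
      rw [(phi_hfEnds (path (a,1))).2, h]
    exact (phi_inv_10 this).symm

lemma hadj_zero {b : ℕ} (hb : 1 ≤ b) :
    halvedFareyGraph.Adj (Sum.inl false) (Sum.inr (path (1, b))) := by
  apply SimpleGraph.Adj.symm
  apply hadj_of_end _ (by simp)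
  right
  have : phi (hfEnds (path (1,b))).2 = (0, 1) := by
    rw [(phi_hfEnds (path (1,b))).2, L0 b hb]
  exact (phi_inv_01 this).symm


def prq (q : ℚ) : Pair :=
  if 0 < q then (q.num.toNat + 2 * q.den, q.den) else (q.den, q.den + q.num.natAbs)

lemma prq_pos {q : ℚ} (h : 0 < q) :
    ((prq q).1 : ℤ) = q.num + 2 * q.den ∧ ((prq q).2 : ℤ) = q.den := by
  have hn : 0 < q.num := Rat.num_pos.mpr h
  simp only [prq, if_pos h]
  constructor <;> push_cast <;> first | omega | trivial

lemma prq_neg {q : ℚ} (h : q < 0) :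
    ((prq q).1 : ℤ) = q.den ∧ ((prq q).2 : ℤ) = q.den - q.num := by
  have hn : q.num < 0 := Rat.num_neg.mpr h
  simp only [prq, if_neg (by linarith : ¬ 0 < q)]
  have habs : ((q.num.natAbs : ℕ) : ℤ) = -q.num := by omega
  constructor
  · push_cast; try omega
    try trivial
  · rw [Nat.cast_add, habs]; ring

lemma valid_prq {q : ℚ} (h : q ≠ 0) : Valid (prq q) := by
  have hd : 1 ≤ q.den := q.pos
  rcases lt_or_gt_of_ne h with hneg | hpos
  · have hn : q.num < 0 := Rat.num_neg.mpr hneg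
    have h1 := prq_neg hneg
    refine ⟨?_, by omega, by omega⟩
    simp only [prq, if_neg (by linarith : ¬ 0 < q)]
    rw [Nat.add_comm]
    exact (Nat.coprime_add_self_right).mpr q.reduced.symm
  · have hn : 0 < q.num := Rat.num_pos.mpr hpos
    have h1 := prq_pos hpos
    refine ⟨?_, by omega, by omega⟩
    simp only [prq, if_pos hpos]
    have hc : Nat.Coprime q.num.toNat q.den := by
      have := q.reduced
      rwa [show q.num.natAbs = q.num.toNat by omega] at this
    have := (Nat.coprime_add_mul_left_left q.num.toNat q.den 2).mpr hc
    rwa [show q.num.toNat + q.den * 2 = q.num.toNat + 2 * q.den by ring] at this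

def brF : Option ℚ → Set (Bool ⊕ List Bool)
  | none => {Sum.inl true, Sum.inl false}
  | some q => if q = 0 then {Sum.inr [], Sum.inr [false]} else {Sum.inr (path (prq q))}

lemma vert_nil : vert [] = (1, 1) := rfl
lemma vert_false : vert [false] = (2, 1) := rfl

lemma path_of_ne {p p' : Pair} (hp : Valid p) (hp' : Valid p') (h : p ≠ p') :
    path p ≠ path p' := by
  intro hc
  apply h
  rw [← vert_path'' hp, ← vert_path'' hp', hc]

lemma prq_ne_11 {q : ℚ} (h : q ≠ 0) : prq q ≠ (1, 1) := by
  have hd : 1 ≤ q.den := q.pos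
  rcases lt_or_gt_of_ne h with hneg | hpos
  · have hn : q.num < 0 := Rat.num_neg.mpr hneg
    have h1 := prq_neg hneg
    intro hc; rw [hc] at h1; simp at h1; omega
  · have hn : 0 < q.num := Rat.num_pos.mpr hpos
    have h1 := prq_pos hpos
    intro hc; rw [hc] at h1; simp at h1; omega

lemma prq_ne_21 {q : ℚ} (h : q ≠ 0) : prq q ≠ (2, 1) := by
  have hd : 1 ≤ q.den := q.pos
  rcases lt_or_gt_of_ne h with hneg | hpos
  · have hn : q.num < 0 := Rat.num_neg.mpr hneg
    have h1 := prq_neg hneg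
    intro hc; rw [hc] at h1; simp at h1; omega
  · have hn : 0 < q.num := Rat.num_pos.mpr hpos
    have h1 := prq_pos hpos
    intro hc; rw [hc] at h1; simp at h1; omega

lemma prq_inj {q r : ℚ} (hq : q ≠ 0) (hr : r ≠ 0) (hne : q ≠ r) : prq q ≠ prq r := by
  have hdq : 1 ≤ q.den := q.pos
  have hdr : 1 ≤ r.den := r.pos
  intro hc
  have hc1 : ((prq q).1 : ℤ) = ((prq r).1 : ℤ) := by rw [hc]
  have hc2 : ((prq q).2 : ℤ) = ((prq r).2 : ℤ) := by rw [hc]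
  rcases lt_or_gt_of_ne hq with hqn | hqp <;> rcases lt_or_gt_of_ne hr with hrn | hrp
  · have h1 := prq_neg hqn; have h2 := prq_neg hrn
    apply hne
    apply Rat.ext
    · omega
    · omega
  · have h1 := prq_neg hqn; have h2 := prq_pos hrp
    have hn1 : q.num < 0 := Rat.num_neg.mpr hqn
    have hn2 : 0 < r.num := Rat.num_pos.mpr hrp
    omega
  · have h1 := prq_pos hqp; have h2 := prq_neg hrn
    have hn1 : 0 < q.num := Rat.num_pos.mpr hqp
    have hn2 : r.num < 0 := Rat.num_neg.mpr hrn
    omega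
  · have h1 := prq_pos hqp; have h2 := prq_pos hrp
    apply hne
    apply Rat.ext
    · omega
    · omega

lemma brF_disjoint {x y : Option ℚ} (h : x ≠ y) : Disjoint (brF x) (brF y) := by
  rw [Set.disjoint_left]
  rcases x with _ | q <;> rcases y with _ | r
  · exact absurd rfl h
  · intro a ha hb
    simp only [brF] at ha hb
    simp only [Set.mem_insert_iff, Set.mem_singleton_iff] at ha
    rcases ha with rfl | rfl <;>
      [skip; skip] <;>
      · split at hb
        · rcases hb with hb | hb <;> simp at hb
        · simp at hb
  · intro a ha hb
    simp only [brF] at ha hb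
    simp only [Set.mem_insert_iff, Set.mem_singleton_iff] at hb
    rcases hb with rfl | rfl <;>
      · split at ha
        · rcases ha with ha | ha <;> simp at ha
        · simp at ha
  · have hqr : q ≠ r := fun hc => h (by rw [hc])
    intro a ha hb
    simp only [brF] at ha hb
    by_cases hq0 : q = 0 <;> by_cases hr0 : r = 0
    · exact hqr (hq0.trans hr0.symm)
    · rw [if_pos hq0] at ha
      rw [if_neg hr0] at hb
      have hv := valid_prq hr0
      simp only [Set.mem_insert_iff, Set.mem_singleton_iff] at ha
      rcases ha with rfl | rfl
      · rw [Set.mem_singleton_iff, Sum.inr.injEq] at hb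
        have := congrArg vert hb
        rw [vert_nil, vert_path'' hv] at this
        exact prq_ne_11 hr0 this.symm
      · rw [Set.mem_singleton_iff, Sum.inr.injEq] at hb
        have := congrArg vert hb
        rw [vert_false, vert_path'' hv] at this
        exact prq_ne_21 hr0 this.symm
    · rw [if_neg hq0] at ha
      rw [if_pos hr0] at hb
      have hv := valid_prq hq0
      rw [Set.mem_singleton_iff] at ha
      subst ha
      simp only [Set.mem_insert_iff, Set.mem_singleton_iff] at hb
      rcases hb with hb | hb <;> rw [Sum.inr.injEq] at hb
      · have := congrArg vert hb
        rw [vert_nil, vert_path'' hv] at this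
        exact prq_ne_11 hq0 this
      · have := congrArg vert hb
        rw [vert_false, vert_path'' hv] at this
        exact prq_ne_21 hq0 this
    · rw [if_neg hq0] at ha
      rw [if_neg hr0] at hb
      rw [Set.mem_singleton_iff] at ha hb
      subst ha
      rw [Sum.inr.injEq] at hb
      exact path_of_ne (valid_prq hq0) (valid_prq hr0) (prq_inj hq0 hr0 hqr) hb

lemma det_prq {q r : ℚ} (hq : q ≠ 0) (hr : r ≠ 0)
    (h : (q.num * (r.den : ℤ) - r.num * (q.den : ℤ)).natAbs = 1) :
    Det (prq q) (prq r) = 1 ∨ Det (prq q) (prq r) = -1 := by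
  have hdq : 1 ≤ q.den := q.pos
  have hdr : 1 ≤ r.den := r.pos
  unfold Det
  rcases lt_or_gt_of_ne hq with hqn | hqp <;> rcases lt_or_gt_of_ne hr with hrn | hrp
  · have h1 := prq_neg hqn; have h2 := prq_neg hrn
    rw [h1.1, h1.2, h2.1, h2.2]
    have : (q.den : ℤ) * ((r.den : ℤ) - r.num) - (r.den : ℤ) * ((q.den : ℤ) - q.num)
        = q.num * r.den - r.num * q.den := by ring
    rw [this]; omega
  · -- q < 0 < r : impossible
    exfalso
    have hn1 : q.num < 0 := Rat.num_neg.mpr hqn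
    have hn2 : 0 < r.num := Rat.num_pos.mpr hrp
    have hA : q.num * (r.den : ℤ) ≤ -(r.den : ℤ) := by nlinarith
    have hB : (q.den : ℤ) ≤ r.num * (q.den : ℤ) := by nlinarith
    omega
  · exfalso
    have hn1 : 0 < q.num := Rat.num_pos.mpr hqp
    have hn2 : r.num < 0 := Rat.num_neg.mpr hrn
    have hA : (r.den : ℤ) ≤ q.num * (r.den : ℤ) := by nlinarith
    have hB : r.num * (q.den : ℤ) ≤ -(q.den : ℤ) := by nlinarith
    omega
  · have h1 := prq_pos hqp; have h2 := prq_pos hrp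
    rw [h1.1, h1.2, h2.1, h2.2]
    have : (q.num + 2 * (q.den : ℤ)) * (r.den : ℤ) - (r.num + 2 * (r.den : ℤ)) * (q.den : ℤ)
        = q.num * r.den - r.num * q.den := by ring
    rw [this]; omega

lemma prq_mem_brF {q : ℚ} (h : q ≠ 0) : Sum.inr (path (prq q)) ∈ brF (some q) := by
  simp only [brF, if_neg h]
  exact rfl

/-- Witness for an edge from `0` to a nonzero rational. -/
lemma witness_zero {r : ℚ} (hr : r ≠ 0)
    (h : ((0 : ℚ).num * (r.den : ℤ) - r.num * ((0:ℚ).den : ℤ)).natAbs = 1) :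
    ∃ a ∈ brF (some 0), ∃ b ∈ brF (some r), halvedFareyGraph.Adj a b := by
  have hdr : 1 ≤ r.den := r.pos
  simp only [Rat.num_ofNat, Rat.den_ofNat] at h
  have hnum : r.num = 1 ∨ r.num = -1 := by omega
  have hvr := valid_prq hr
  rcases hnum with hnum | hnum
  · -- r > 0, use [false] = path (2,1)
    have hrp : 0 < r := Rat.num_pos.mp (by omega)
    have h2 := prq_pos hrp
    refine ⟨Sum.inr [false], by simp [brF], Sum.inr (path (prq r)), prq_mem_brF hr, ?_⟩
    have h21 : path ((2 : ℕ), (1 : ℕ)) = [false] := by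
      rw [path_false' (by norm_num) (by norm_num), show ((2:ℕ) - 1) = 1 from rfl, path_diag]
      rfl
    rw [← h21]
    apply hadj_of_det ⟨by norm_num, by norm_num, by norm_num⟩ hvr
    unfold Det
    rw [h2.1, h2.2, hnum]
    push_cast
    omega
  · -- r < 0, use [] = path (1,1)
    have hrn : r < 0 := Rat.num_neg.mp (by omega)
    have h2 := prq_neg hrn
    refine ⟨Sum.inr [], by simp [brF], Sum.inr (path (prq r)), prq_mem_brF hr, ?_⟩
    rw [← path_diag]
    apply hadj_of_det ⟨by norm_num, by norm_num, by norm_num⟩ hvr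
    unfold Det
    rw [h2.1, h2.2, hnum]
    push_cast
    omega

/-- Witness for an edge from `∞` to an integer rational. -/
lemma witness_inf {r : ℚ} (h : r.den = 1) :
    ∃ a ∈ brF none, ∃ b ∈ brF (some r), halvedFareyGraph.Adj a b := by
  by_cases hr : r = 0
  · subst hr
    refine ⟨Sum.inl true, by simp [brF], Sum.inr [], by simp [brF], ?_⟩
    exact (hadj_of_end (t := []) (Or.inl rfl) (by simp [hfEnds])).symm
  · have hvr := valid_prq hr
    rcases lt_or_gt_of_ne hr with hrn | hrp
    · -- r negative integer : prq r = (1, _), use hadj_zero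
      have h2 := prq_neg hrn
      have hfst : (prq r).1 = 1 := by
        have := h2.1; rw [h] at this; exact_mod_cast this
      refine ⟨Sum.inl false, by simp [brF], Sum.inr (path (prq r)), prq_mem_brF hr, ?_⟩
      have := hadj_zero (b := (prq r).2) hvr.2.2
      have hpr : ((1 : ℕ), (prq r).2) = prq r := by
        apply Prod.ext
        · exact hfst.symm
        · rfl
      rwa [hpr] at this
    · -- r positive integer : prq r = (_, 1), use hadj_inf
      have h2 := prq_pos hrp
      have hsnd : (prq r).2 = 1 := by
        have := h2.2; rw [h] at this; exact_mod_cast this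
      refine ⟨Sum.inl true, by simp [brF], Sum.inr (path (prq r)), prq_mem_brF hr, ?_⟩
      have := hadj_inf (a := (prq r).1) hvr.2.1
      have hpr : ((prq r).1, (1 : ℕ)) = prq r := by
        apply Prod.ext
        · rfl
        · exact hsnd.symm
      rwa [hpr] at this

lemma edge_witness {x y : Option ℚ} (h : fareyGraph.Adj x y) :
    ∃ a ∈ brF x, ∃ b ∈ brF y, halvedFareyGraph.Adj a b := by
  rcases x with _ | q <;> rcases y with _ | r
  · exact absurd h (by simp [fareyGraph])
  · exact witness_inf h
  · obtain ⟨a, ha, b, hb, hab⟩ := witness_inf (h : q.den = 1)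
    exact ⟨b, hb, a, ha, hab.symm⟩
  · have hdet : (q.num * (r.den : ℤ) - r.num * (q.den : ℤ)).natAbs = 1 := h
    have hne : q ≠ r := by
      intro hc; subst hc; simp at hdet
    by_cases hq0 : q = 0
    · subst hq0
      exact witness_zero (fun hc => hne hc.symm) hdet
    · by_cases hr0 : r = 0
      · subst hr0
        have hdet' : ((0:ℚ).num * (q.den : ℤ) - q.num * ((0:ℚ).den : ℤ)).natAbs = 1 := by
          simp only [Rat.num_ofNat, Rat.den_ofNat] at hdet ⊢
          omega
        obtain ⟨a, ha, b, hb, hab⟩ := witness_zero hq0 hdet'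
        exact ⟨b, hb, a, ha, hab.symm⟩
      · refine ⟨Sum.inr (path (prq q)), prq_mem_brF hq0,
          Sum.inr (path (prq r)), prq_mem_brF hr0, ?_⟩
        exact hadj_of_det (valid_prq hq0) (valid_prq hr0) (det_prq hq0 hr0 hdet)

end FareyAux

section Helpers

lemma connected_singleton {V : Type*} (G : SimpleGraph V) (v : V) :
    (G.induce {v}).Connected := by
  rw [SimpleGraph.connected_iff]
  refine ⟨?_, ⟨⟨v, rfl⟩⟩⟩
  intro a b
  have : a = b := by
    apply Subtype.ext
    have ha := a.2
    have hb := b.2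
    simp only [Set.mem_singleton_iff] at ha hb
    rw [ha, hb]
  rw [this]

lemma connected_pair {V : Type*} {G : SimpleGraph V} {x y : V} (h : G.Adj x y) :
    (G.induce ({x, y} : Set V)).Connected := by
  rw [SimpleGraph.connected_iff]
  refine ⟨?_, ⟨⟨x, Or.inl rfl⟩⟩⟩
  have hxy : (G.induce ({x, y} : Set V)).Adj ⟨x, Or.inl rfl⟩ ⟨y, Or.inr rfl⟩ := h
  intro a b
  have key : ∀ c : ({x, y} : Set V),
      (G.induce ({x, y} : Set V)).Reachable ⟨x, Or.inl rfl⟩ c := by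
    intro c
    obtain ⟨cv, hc⟩ := c
    rcases hc with rfl | hc
    · exact SimpleGraph.Reachable.refl _
    · simp only [Set.mem_singleton_iff] at hc
      subst hc
      exact hxy.reachable
  exact (key a).symm.trans (key b)

end Helpers



/-- **Lemma 2.1.** The halved Farey graph and the Farey graph are minor-equivalent:
each is a minor of the other. -/
theorem halvedFarey_minorEquiv_farey : MinorEquiv halvedFareyGraph fareyGraph := by
  constructor
  · -- the Farey graph is a minor of the halved Farey graph
    refine ⟨FareyAux.brF, ?_, ?_, ?_, ?_⟩
    · intro w
      rcases w with _ | q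
      · exact ⟨Sum.inl true, by simp [FareyAux.brF]⟩
      · by_cases hq : q = 0
        · subst hq; exact ⟨Sum.inr [], by simp [FareyAux.brF]⟩
        · exact ⟨_, FareyAux.prq_mem_brF hq⟩
    · intro w
      rcases w with _ | q
      · have heq : FareyAux.brF none = {Sum.inl true, Sum.inl false} := rfl
        rw [heq]
        exact connected_pair ⟨by simp, Or.inl ⟨rfl, rfl⟩⟩
      · by_cases hq : q = 0
        · subst hq
          have heq : FareyAux.brF (some 0) = {Sum.inr [], Sum.inr [false]} := by
            simp [FareyAux.brF]
          rw [heq]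
          exact connected_pair
            ((FareyAux.hadj_of_end (t := [false]) (Or.inl rfl) (by simp [hfEnds])).symm)
        · have heq : FareyAux.brF (some q) = {Sum.inr (FareyAux.path (FareyAux.prq q))} := by
            simp [FareyAux.brF, hq]
          rw [heq]
          exact connected_singleton _ _
    · intro w w' h
      exact FareyAux.brF_disjoint h
    · intro w w' h
      exact FareyAux.edge_witness h
  · -- the halved Farey graph is a minor of the Farey graph
    refine ⟨fun w => {FareyAux.fmap w}, ?_, ?_, ?_, ?_⟩
    · intro w; exact ⟨_, rfl⟩
    · intro w; exact connected_singleton _ _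
    · intro w w' hne
      rw [Set.disjoint_singleton]
      exact fun h => hne (FareyAux.fmap_inj h)
    · intro w w' hadj
      exact ⟨_, rfl, _, rfl, FareyAux.adj_forward hadj⟩
end

section
/- The Farey graph does not contain the complete bipartite graph K_{2,ℵ0} (with one side of size 2 and the other side countably infinite) as a minor. -/
open SimpleGraph

universe u v

/-! ### Auxiliary development: the Farey graph is outerplanar (vertices on the circle
`ℚ ∪ {∞}`, edges pairwise non-crossing chords), hence has no `K_{2,3}` minor. -/

namespace FNK

/-- Denominator identity: anything strictly between two Farey neighbours has
denominator at least the sum of their denominators. -/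
lemma den_add_le (p q r : ℚ) (h1 : p < q) (h2 : q < r)
    (he : (p.num * (r.den:ℤ) - r.num * (p.den:ℤ)).natAbs = 1) :
    (p.den : ℤ) + (r.den : ℤ) ≤ (q.den : ℤ) := by
  have h3 : p < r := h1.trans h2
  rw [Rat.lt_iff] at h1 h2 h3
  have hpr : r.num * (p.den:ℤ) - p.num * (r.den:ℤ) = 1 := by
    rcases Int.natAbs_eq_iff.mp he with h | h
    · omega
    · omega
  have key : (q.den:ℤ) = (q.num * p.den - p.num * q.den) * r.den
      + (r.num * q.den - q.num * r.den) * p.den := by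
    linear_combination (-(q.den:ℤ)) * hpr
  have hp : (0:ℤ) < p.den := by exact_mod_cast p.pos
  have hq : (0:ℤ) < q.den := by exact_mod_cast q.pos
  have hr : (0:ℤ) < r.den := by exact_mod_cast r.pos
  nlinarith [mul_nonneg (by omega : (0:ℤ) ≤ q.num * p.den - p.num * q.den - 1) hr.le,
    mul_nonneg (by omega : (0:ℤ) ≤ r.num * q.den - q.num * r.den - 1) hp.le]

/-- Linear order on `Option ℚ` with `∞ = none` on top. -/
def olt : Option ℚ → Option ℚ → Prop
  | some a, some b => a < b
  | some _, none => True
  | none, _ => False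

lemma olt_trans : ∀ {x y z}, olt x y → olt y z → olt x z := by
  rintro (_|a) (_|b) (_|c) h1 h2 <;> first
    | exact h1.elim | exact h2.elim | trivial | exact (h1.trans h2 : a < c)

lemma olt_asymm : ∀ {x y}, olt x y → olt y x → False := by
  rintro (_|a) (_|b) h1 h2
  · exact h1
  · exact h1
  · exact h2
  · exact absurd (h2 : b < a) (not_lt.mpr (le_of_lt h1))

lemma olt_trichotomy : ∀ {x y : Option ℚ}, x ≠ y → olt x y ∨ olt y x := by
  rintro (_|a) (_|b) h
  · exact absurd rfl h
  · exact Or.inr trivial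
  · exact Or.inl trivial
  · rcases lt_trichotomy a b with h1 | h1 | h1
    · exact Or.inl h1
    · exact absurd (by rw [h1]) h
    · exact Or.inr h1

/-- Edges of the Farey graph are pairwise non-crossing chords of the circle. -/
lemma no_cross : ∀ {x1 x2 x3 x4 : Option ℚ}, olt x1 x2 → olt x2 x3 → olt x3 x4 →
    fareyGraph.Adj x1 x3 → fareyGraph.Adj x2 x4 → False := by
  have dp : ∀ q : ℚ, (0:ℤ) < q.den := fun q => by exact_mod_cast q.pos
  rintro (_|p) (_|q) (_|r) (_|s) h12 h23 h34 e13 e24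
  any_goals exact h12
  any_goals exact h23
  any_goals exact h34
  · have e13' : (p.num * (r.den:ℤ) - r.num * (p.den:ℤ)).natAbs = 1 := e13
    have e24' : q.den = 1 := e24
    have := den_add_le p q r h12 h23 e13'
    have hp := dp p; have hr := dp r
    omega
  · have e13' : (p.num * (r.den:ℤ) - r.num * (p.den:ℤ)).natAbs = 1 := e13
    have e24' : (q.num * (s.den:ℤ) - s.num * (q.den:ℤ)).natAbs = 1 := e24
    have k1 := den_add_le p q r h12 h23 e13'
    have k2 := den_add_le q r s h23 h34 e24'
    have hp := dp p; have hs := dp s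
    omega

/-- `S` is connected via walks of the Farey graph staying inside `S`. -/
def Conn (S : Set (Option ℚ)) : Prop :=
  ∀ x ∈ S, ∀ y ∈ S, ∃ w : fareyGraph.Walk x y, ∀ z ∈ w.support, z ∈ S

lemma conn_of_induce {S : Set (Option ℚ)} (h : (fareyGraph.induce S).Connected) : Conn S := by
  intro x hx y hy
  obtain ⟨w⟩ := h.preconnected ⟨x, hx⟩ ⟨y, hy⟩
  refine ⟨w.map ⟨Subtype.val, fun {a b} hab => hab⟩, ?_⟩
  intro z hz
  rw [Walk.support_map, List.mem_map] at hz
  obtain ⟨⟨a, ha⟩, -, rfl⟩ := hz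
  exact ha

lemma conn_union {S T : Set (Option ℚ)} (hS : Conn S) (hT : Conn T)
    {a b : Option ℚ} (ha : a ∈ S) (hb : b ∈ T) (hab : fareyGraph.Adj a b) :
    Conn (S ∪ T) := by
  have cross : ∀ x ∈ S, ∀ y ∈ T, ∃ w : fareyGraph.Walk x y, ∀ z ∈ w.support, z ∈ S ∪ T := by
    intro x hx y hy
    obtain ⟨w1, h1⟩ := hS x hx a ha
    obtain ⟨w2, h2⟩ := hT b hb y hy
    refine ⟨w1.append (Walk.cons hab w2), ?_⟩
    intro z hz
    rw [Walk.support_append] at hz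
    rcases List.mem_append.mp hz with hz | hz
    · exact Or.inl (h1 z hz)
    · have := List.mem_of_mem_tail hz
      rw [Walk.support_cons] at this
      rcases List.mem_cons.mp this with rfl | hz2
      · exact Or.inl ha
      · exact Or.inr (h2 z hz2)
  rintro x (hx | hx) y (hy | hy)
  · obtain ⟨w, hw⟩ := hS x hx y hy
    exact ⟨w, fun z hz => Or.inl (hw z hz)⟩
  · exact cross x hx y hy
  · obtain ⟨w, hw⟩ := cross y hy x hx
    exact ⟨w.reverse, fun z hz => hw z (by rwa [Walk.support_reverse, List.mem_reverse] at hz)⟩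
  · obtain ⟨w, hw⟩ := hT x hx y hy
    exact ⟨w, fun z hz => Or.inr (hw z hz)⟩

/-- Discrete intermediate value theorem along a walk. -/
lemma walk_ivt (P : Option ℚ → Prop) : ∀ {u v : Option ℚ} (w : fareyGraph.Walk u v),
    P u → ¬ P v →
    ∃ x y, fareyGraph.Adj x y ∧ P x ∧ ¬ P y ∧ x ∈ w.support ∧ y ∈ w.support := by
  intro u v w
  induction w with
  | nil => intro hu hv; exact absurd hu hv
  | @cons u b v h p ih =>
    intro hu hv
    by_cases hb : P b
    · obtain ⟨x, y, hxy, hx, hy, hxs, hys⟩ := ih hb hv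
      exact ⟨x, y, hxy, hx, hy, by rw [Walk.support_cons]; exact List.mem_cons_of_mem _ hxs,
        by rw [Walk.support_cons]; exact List.mem_cons_of_mem _ hys⟩
    · exact ⟨u, b, h, hu, hb, by rw [Walk.support_cons]; exact List.mem_cons_self,
        by rw [Walk.support_cons]; exact List.mem_cons_of_mem _ p.start_mem_support⟩

/-- A connected set avoiding both ends of an edge cannot have points both strictly
inside and outside the chord. -/
lemma sep {x y : Option ℚ} (hxy : fareyGraph.Adj x y) {T : Set (Option ℚ)} (hT : Conn T)
    (hx : x ∉ T) (hy : y ∉ T) {t1 t2 : Option ℚ} (ht1 : t1 ∈ T) (ht2 : t2 ∈ T)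
    (h1 : olt x t1) (h2 : olt t1 y) (h3 : ¬ (olt x t2 ∧ olt t2 y)) : False := by
  obtain ⟨w, hw⟩ := hT t1 ht1 t2 ht2
  obtain ⟨z, z', hzz, hz, hz', hzs, hz's⟩ := walk_ivt (fun z => olt x z ∧ olt z y) w ⟨h1, h2⟩ h3
  have hzT := hw z hzs
  have hz'T := hw z' hz's
  have hne1 : z' ≠ x := fun h => hx (h ▸ hz'T)
  have hne2 : z' ≠ y := fun h => hy (h ▸ hz'T)
  rcases olt_trichotomy hne1 with hlt | hlt
  · exact no_cross hlt hz.1 hz.2 hzz.symm hxy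
  · have : ¬ olt z' y := fun hy2 => hz' ⟨hlt, hy2⟩
    rcases olt_trichotomy hne2 with hlt2 | hlt2
    · exact absurd hlt2 this
    · exact no_cross hz.1 hz.2 hlt2 hxy hzz

/-- Two disjoint connected sets do not interleave around the circle
(linear pattern `s1 < t1 < s2 < t2`). -/
lemma no_interleave {S T : Set (Option ℚ)} (hS : Conn S) (hT : Conn T)
    (hd : ∀ z ∈ S, z ∉ T) {s1 s2 t1 t2 : Option ℚ}
    (hs1 : s1 ∈ S) (hs2 : s2 ∈ S) (ht1 : t1 ∈ T) (ht2 : t2 ∈ T)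
    (h1 : olt s1 t1) (h2 : olt t1 s2) (h3 : olt s2 t2) : False := by
  obtain ⟨w, hw⟩ := hS s2 hs2 s1 hs1
  have hPs1 : ¬ (olt t1 s1 ∧ olt s1 t2) := fun h => olt_asymm h1 h.1
  obtain ⟨z, z', hzz, hz, hz', hzs, hz's⟩ :=
    walk_ivt (fun z => olt t1 z ∧ olt z t2) w ⟨h2, h3⟩ hPs1
  have hzS := hw z hzs
  have hz'S := hw z' hz's
  have hne1 : z' ≠ t1 := fun h => hd z' hz'S (h ▸ ht1)
  have hne2 : z' ≠ t2 := fun h => hd z' hz'S (h ▸ ht2)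
  rcases olt_trichotomy hne1 with hlt | hlt
  · exact sep hzz.symm hT (hd z' hz'S) (hd z hzS) ht1 ht2 hlt hz.1
      (fun h => olt_asymm h.2 hz.2)
  · have : ¬ olt z' t2 := fun h2' => hz' ⟨hlt, h2'⟩
    rcases olt_trichotomy hne2 with hlt2 | hlt2
    · exact absurd hlt2 this
    · exact sep hzz hT (hd z hzS) (hd z' hz'S) ht2 ht1 hz.2 hlt2
        (fun h => olt_asymm h.1 hz.1)

lemma outside_aux {a b γ : Option ℚ} (h : ¬ (olt a γ ∧ olt γ b))
    (hna : γ ≠ a) (hnb : γ ≠ b) : olt γ a ∨ olt b γ := by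
  rcases olt_trichotomy hna with h1 | h1
  · exact Or.inl h1
  · rcases olt_trichotomy hnb with h2 | h2
    · exact absurd ⟨h1, h2⟩ h
    · exact Or.inr h2

/-- Two connectors lying on the same side of the chord `ab` are impossible. -/
lemma pairCase {A B Ci Cj : Set (Option ℚ)}
    (hA : Conn A) (hB : Conn B) (hCi : Conn Ci) (hCj : Conn Cj)
    (dAB : ∀ z ∈ A, z ∉ B) (dACi : ∀ z ∈ A, z ∉ Ci) (dACj : ∀ z ∈ A, z ∉ Cj)
    (dBCi : ∀ z ∈ B, z ∉ Ci) (dBCj : ∀ z ∈ B, z ∉ Cj) (dCiCj : ∀ z ∈ Ci, z ∉ Cj)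
    (eAi : ∃ x ∈ A, ∃ c ∈ Ci, fareyGraph.Adj x c)
    (eAj : ∃ x ∈ A, ∃ c ∈ Cj, fareyGraph.Adj x c)
    (eBi : ∃ x ∈ B, ∃ c ∈ Ci, fareyGraph.Adj x c)
    (eBj : ∃ x ∈ B, ∃ c ∈ Cj, fareyGraph.Adj x c)
    {a b γi γj : Option ℚ} (ha : a ∈ A) (hb : b ∈ B) (hγi : γi ∈ Ci) (hγj : γj ∈ Cj)
    (hab : olt a b)
    (hside : (olt a γi ∧ olt γi b) ↔ (olt a γj ∧ olt γj b)) : False := by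
  obtain ⟨x1, hx1, c1, hc1, e1⟩ := eAi
  obtain ⟨x2, hx2, c2, hc2, e2⟩ := eAj
  obtain ⟨x3, hx3, c3, hc3, e3⟩ := eBi
  obtain ⟨x4, hx4, c4, hc4, e4⟩ := eBj
  have cAi : Conn (A ∪ Ci) := conn_union hA hCi hx1 hc1 e1
  have cAj : Conn (A ∪ Cj) := conn_union hA hCj hx2 hc2 e2
  have cBi : Conn (B ∪ Ci) := conn_union hB hCi hx3 hc3 e3
  have cBj : Conn (B ∪ Cj) := conn_union hB hCj hx4 hc4 e4
  have dAiBj : ∀ z ∈ A ∪ Ci, z ∉ B ∪ Cj := by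
    intro z hz h; rcases hz with hz | hz <;> rcases h with h | h
    exacts [dAB z hz h, dACj z hz h, dBCi z h hz, dCiCj z hz h]
  have dAjBi : ∀ z ∈ A ∪ Cj, z ∉ B ∪ Ci := by
    intro z hz h; rcases hz with hz | hz <;> rcases h with h | h
    exacts [dAB z hz h, dACi z hz h, dBCj z h hz, dCiCj z h hz]
  have dBiAj : ∀ z ∈ B ∪ Ci, z ∉ A ∪ Cj := by
    intro z hz h; rcases hz with hz | hz <;> rcases h with h | h
    exacts [dAB z h hz, dBCj z hz h, dACi z h hz, dCiCj z hz h]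
  have dBjAi : ∀ z ∈ B ∪ Cj, z ∉ A ∪ Ci := by
    intro z hz h; rcases hz with hz | hz <;> rcases h with h | h
    exacts [dAB z h hz, dBCi z hz h, dACj z h hz, dCiCj z h hz]
  have hneγ : γi ≠ γj := fun h => dCiCj γi hγi (h ▸ hγj)
  have hγia : γi ≠ a := fun h => dACi a ha (h ▸ hγi)
  have hγib : γi ≠ b := fun h => dBCi b hb (h ▸ hγi)
  have hγja : γj ≠ a := fun h => dACj a ha (h ▸ hγj)
  have hγjb : γj ≠ b := fun h => dBCj b hb (h ▸ hγj)
  by_cases Hi : olt a γi ∧ olt γi b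
  · have Hj := hside.mp Hi
    rcases olt_trichotomy hneγ with hij | hij
    · exact no_interleave cAj cBi dAjBi (Or.inl ha) (Or.inr hγj) (Or.inr hγi) (Or.inl hb)
        Hi.1 hij Hj.2
    · exact no_interleave cAi cBj dAiBj (Or.inl ha) (Or.inr hγi) (Or.inr hγj) (Or.inl hb)
        Hj.1 hij Hi.2
  · have Hj : ¬ (olt a γj ∧ olt γj b) := fun h => Hi (hside.mpr h)
    rcases outside_aux Hi hγia hγib with hi | hi <;>
      rcases outside_aux Hj hγja hγjb with hj | hj
    · rcases olt_trichotomy hneγ with hij | hij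
      · exact no_interleave cAi cBj dAiBj (Or.inr hγi) (Or.inl ha) (Or.inr hγj) (Or.inl hb)
          hij hj hab
      · exact no_interleave cAj cBi dAjBi (Or.inr hγj) (Or.inl ha) (Or.inr hγi) (Or.inl hb)
          hij hi hab
    · exact no_interleave cBi cAj dBiAj (Or.inr hγi) (Or.inl hb) (Or.inl ha) (Or.inr hγj)
        hi hab hj
    · exact no_interleave cBj cAi dBjAi (Or.inr hγj) (Or.inl hb) (Or.inl ha) (Or.inr hγi)
        hj hab hi
    · rcases olt_trichotomy hneγ with hij | hij
      · exact no_interleave cAi cBj dAiBj (Or.inl ha) (Or.inr hγi) (Or.inl hb) (Or.inr hγj)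
          hab hi hij
      · exact no_interleave cAj cBi dAjBi (Or.inl ha) (Or.inr hγj) (Or.inl hb) (Or.inr hγi)
          hab hj hij

/-- There is no `K_{2,3}`-like configuration of five disjoint connected sets. -/
lemma endgame {A B C1 C2 C3 : Set (Option ℚ)}
    (hA : Conn A) (hB : Conn B) (hC1 : Conn C1) (hC2 : Conn C2) (hC3 : Conn C3)
    (dAB : ∀ z ∈ A, z ∉ B)
    (dAC1 : ∀ z ∈ A, z ∉ C1) (dAC2 : ∀ z ∈ A, z ∉ C2) (dAC3 : ∀ z ∈ A, z ∉ C3)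
    (dBC1 : ∀ z ∈ B, z ∉ C1) (dBC2 : ∀ z ∈ B, z ∉ C2) (dBC3 : ∀ z ∈ B, z ∉ C3)
    (dC12 : ∀ z ∈ C1, z ∉ C2) (dC13 : ∀ z ∈ C1, z ∉ C3) (dC23 : ∀ z ∈ C2, z ∉ C3)
    (eA1 : ∃ x ∈ A, ∃ c ∈ C1, fareyGraph.Adj x c)
    (eA2 : ∃ x ∈ A, ∃ c ∈ C2, fareyGraph.Adj x c)
    (eA3 : ∃ x ∈ A, ∃ c ∈ C3, fareyGraph.Adj x c)
    (eB1 : ∃ x ∈ B, ∃ c ∈ C1, fareyGraph.Adj x c)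
    (eB2 : ∃ x ∈ B, ∃ c ∈ C2, fareyGraph.Adj x c)
    (eB3 : ∃ x ∈ B, ∃ c ∈ C3, fareyGraph.Adj x c)
    {a b γ1 γ2 γ3 : Option ℚ} (ha : a ∈ A) (hb : b ∈ B)
    (hγ1 : γ1 ∈ C1) (hγ2 : γ2 ∈ C2) (hγ3 : γ3 ∈ C3)
    (hab : olt a b) : False := by
  by_cases I1 : olt a γ1 ∧ olt γ1 b <;> by_cases I2 : olt a γ2 ∧ olt γ2 b <;>
    by_cases I3 : olt a γ3 ∧ olt γ3 b
  · exact pairCase hA hB hC1 hC2 dAB dAC1 dAC2 dBC1 dBC2 dC12 eA1 eA2 eB1 eB2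
      ha hb hγ1 hγ2 hab (iff_of_true I1 I2)
  · exact pairCase hA hB hC1 hC2 dAB dAC1 dAC2 dBC1 dBC2 dC12 eA1 eA2 eB1 eB2
      ha hb hγ1 hγ2 hab (iff_of_true I1 I2)
  · exact pairCase hA hB hC1 hC3 dAB dAC1 dAC3 dBC1 dBC3 dC13 eA1 eA3 eB1 eB3
      ha hb hγ1 hγ3 hab (iff_of_true I1 I3)
  · exact pairCase hA hB hC2 hC3 dAB dAC2 dAC3 dBC2 dBC3 dC23 eA2 eA3 eB2 eB3
      ha hb hγ2 hγ3 hab (iff_of_false I2 I3)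
  · exact pairCase hA hB hC2 hC3 dAB dAC2 dAC3 dBC2 dBC3 dC23 eA2 eA3 eB2 eB3
      ha hb hγ2 hγ3 hab (iff_of_true I2 I3)
  · exact pairCase hA hB hC1 hC3 dAB dAC1 dAC3 dBC1 dBC3 dC13 eA1 eA3 eB1 eB3
      ha hb hγ1 hγ3 hab (iff_of_false I1 I3)
  · exact pairCase hA hB hC1 hC2 dAB dAC1 dAC2 dBC1 dBC2 dC12 eA1 eA2 eB1 eB2
      ha hb hγ1 hγ2 hab (iff_of_false I1 I2)
  · exact pairCase hA hB hC1 hC2 dAB dAC1 dAC2 dBC1 dBC2 dC12 eA1 eA2 eB1 eB2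
      ha hb hγ1 hγ2 hab (iff_of_false I1 I2)

end FNK

/-- The Farey graph does not contain `K_{2,ℵ₀}` as a minor. -/
theorem farey_no_K2aleph0_minor :
    ¬ HasMinor fareyGraph (completeBipartiteGraph (Fin 2) ℕ) := by
  rintro ⟨br, hne, hconn, hdisj, hadj⟩
  have adj : ∀ (i : Fin 2) (n : ℕ),
      (completeBipartiteGraph (Fin 2) ℕ).Adj (Sum.inl i) (Sum.inr n) := by
    intro i n; simp
  have d : ∀ {u v : Fin 2 ⊕ ℕ}, u ≠ v → ∀ z ∈ br u, z ∉ br v :=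
    fun h _ hz => Set.disjoint_left.mp (hdisj _ _ h) hz
  have conn : ∀ w, FNK.Conn (br w) := fun w => FNK.conn_of_induce (hconn w)
  obtain ⟨a, ha⟩ := hne (Sum.inl 0)
  obtain ⟨b, hb⟩ := hne (Sum.inl 1)
  obtain ⟨g1, hg1⟩ := hne (Sum.inr 0)
  obtain ⟨g2, hg2⟩ := hne (Sum.inr 1)
  obtain ⟨g3, hg3⟩ := hne (Sum.inr 2)
  have hne01 : (Sum.inl 0 : Fin 2 ⊕ ℕ) ≠ Sum.inl 1 := by simp
  have hab : a ≠ b := fun h => d hne01 a ha (h ▸ hb)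
  have e : ∀ (i : Fin 2) (n : ℕ), ∃ x ∈ br (Sum.inl i), ∃ c ∈ br (Sum.inr n),
      fareyGraph.Adj x c := fun i n => hadj _ _ (adj i n)
  rcases FNK.olt_trichotomy hab with h | h
  · exact FNK.endgame (conn _) (conn _) (conn _) (conn _) (conn _)
      (d hne01) (d (by simp)) (d (by simp)) (d (by simp))
      (d (by simp)) (d (by simp)) (d (by simp))
      (d (by simp)) (d (by simp)) (d (by simp))
      (e 0 0) (e 0 1) (e 0 2) (e 1 0) (e 1 1) (e 1 2)
      ha hb hg1 hg2 hg3 h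
  · exact FNK.endgame (conn _) (conn _) (conn _) (conn _) (conn _)
      (d hne01.symm) (d (by simp)) (d (by simp)) (d (by simp))
      (d (by simp)) (d (by simp)) (d (by simp))
      (d (by simp)) (d (by simp)) (d (by simp))
      (e 1 0) (e 1 1) (e 1 2) (e 0 0) (e 0 1) (e 0 2)
      hb ha hg1 hg2 hg3 h
end

section
/- There exists an infinitely edge-connected graph that contains neither the Farey graph nor T_{ℵ0} * t as a topological minor. -/
open SimpleGraph

universe u v

/-! ### The counterexample graph -/

namespace Thm34

/-- Vertex set: `none` is the root vertex `u`; `some []` is the root vertex `v`;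
`some (i :: l)` is the `i`-th tooth placed on the fertile edge determined by `l`. -/
abbrev Vx : Type := Option (List ℕ)

/-- The parent of a code. -/
def up : List ℕ → Vx
  | [] => none
  | _ :: t => some t

/-- The grandparent of a code. -/
def up2 : List ℕ → Vx
  | [] => none
  | _ :: t => up t

lemma up_nil : up [] = none := rfl
lemma up2_nil : up2 [] = none := rfl
lemma up_cons (i : ℕ) (l : List ℕ) : up (i :: l) = some l := rfl
lemma up2_cons (i : ℕ) (l : List ℕ) : up2 (i :: l) = up l := rfl

/-- The counterexample graph: every code is joined to its parent and grandparent. -/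
def Gr : SimpleGraph Vx where
  Adj x y := x ≠ y ∧
    ((∃ l, x = some l ∧ (y = up l ∨ y = up2 l)) ∨
     (∃ l, y = some l ∧ (x = up l ∨ x = up2 l)))
  symm := by
    constructor
    rintro x y ⟨hne, h⟩
    exact ⟨hne.symm, h.symm⟩
  loopless := by constructor; rintro x ⟨hne, -⟩; exact hne rfl

lemma some_cons_ne_up (j : ℕ) (l : List ℕ) : (some (j :: l) : Vx) ≠ up l := by
  cases l with
  | nil => simp [up]
  | cons c t =>
    simp only [up, ne_eq, Option.some.injEq]
    intro h
    have := congrArg List.length h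
    simp only [List.length_cons] at this
    omega

lemma up_ne_some (m : List ℕ) : up m ≠ some m := by
  cases m with
  | nil => simp [up]
  | cons c t =>
    simp only [up, ne_eq, Option.some.injEq]
    exact fun h => List.cons_ne_self c t h.symm

lemma up2_ne_some (m : List ℕ) : up2 m ≠ some m := by
  cases m with
  | nil => simp [up2]
  | cons c t =>
    cases t with
    | nil => simp [up2, up]
    | cons d t' =>
      simp only [up2, up, ne_eq, Option.some.injEq]
      intro h
      have := congrArg List.length h
      simp only [List.length_cons] at this
      omega

lemma some_ne_some_cons (i : ℕ) (l : List ℕ) : (some (i :: l) : Vx) ≠ some l := by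
  simpa using List.cons_ne_self i l

lemma adj_child (i : ℕ) (l : List ℕ) : Gr.Adj (some (i :: l)) (some l) :=
  ⟨some_ne_some_cons i l, Or.inl ⟨i :: l, rfl, Or.inl rfl⟩⟩

lemma adj_gchild (i : ℕ) (l : List ℕ) : Gr.Adj (some (i :: l)) (up l) :=
  ⟨some_cons_ne_up i l, Or.inl ⟨i :: l, rfl, Or.inr rfl⟩⟩

/-! ### Infinite edge-connectivity -/

lemma good_tooth {F : Set (Sym2 Vx)} (hF : F.Finite) (l : List ℕ) :
    ∃ j : ℕ, s(some (j :: l), some l) ∉ F ∧ s(some (j :: l), up l) ∉ F := by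
  have h1 : {j : ℕ | s(some (j :: l), (some l : Vx)) ∈ F}.Finite := by
    apply Set.Finite.preimage _ hF
    intro a _ b _ hab
    rw [Sym2.eq_iff] at hab
    rcases hab with ⟨h, -⟩ | ⟨h1, -⟩
    · simpa using h
    · exact absurd (by simpa using h1) (List.cons_ne_self a l)
  have h2 : {j : ℕ | s(some (j :: l), up l) ∈ F}.Finite := by
    apply Set.Finite.preimage _ hF
    intro a _ b _ hab
    rw [Sym2.eq_iff] at hab
    rcases hab with ⟨h, -⟩ | ⟨h1, -⟩
    · simpa using h
    · exact absurd h1 (some_cons_ne_up a l)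
  obtain ⟨j, hj⟩ := ((h1.union h2).infinite_compl).nonempty
  rw [Set.mem_compl_iff, Set.mem_union] at hj
  push_neg at hj
  exact ⟨j, hj.1, hj.2⟩

lemma walk_to_root {F : Set (Sym2 Vx)} (hF : F.Finite) :
    ∀ l : List ℕ, ∃ W : Gr.Walk (some l) none, ∀ e ∈ W.edges, e ∉ F := by
  intro l
  induction l with
  | nil =>
    obtain ⟨j, hj1, hj2⟩ := good_tooth hF ([] : List ℕ)
    refine ⟨Walk.cons (adj_child j []).symm (Walk.cons (adj_gchild j []) Walk.nil), ?_⟩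
    intro e he
    change e ∈ s(some [], some [j]) :: s(some [j], up []) :: ([] : List (Sym2 Vx)) at he
    simp only [Walk.edges_cons, Walk.edges_nil, List.mem_cons, List.not_mem_nil, or_false] at he
    rcases he with rfl | rfl
    · rw [Sym2.eq_swap]; exact hj1
    · exact hj2
  | cons i t ih =>
    obtain ⟨W', hW'⟩ := ih
    obtain ⟨j, hj1, hj2⟩ := good_tooth hF (i :: t)
    refine ⟨Walk.cons (adj_child j (i :: t)).symm (Walk.cons (adj_gchild j (i :: t)) W'), ?_⟩
    intro e he
    change e ∈ s(some (i :: t), some (j :: i :: t)) :: s(some (j :: i :: t), up (i :: t)) :: W'.edges at he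
    simp only [Walk.edges_cons, List.mem_cons] at he
    rcases he with rfl | rfl | he
    · rw [Sym2.eq_swap]; exact hj1
    · exact hj2
    · exact hW' e he

lemma exists_walk_avoid {F : Set (Sym2 Vx)} (hF : F.Finite) (a b : Vx) :
    ∃ W : Gr.Walk a b, ∀ e ∈ W.edges, e ∉ F := by
  have h : ∀ x : Vx, ∃ W : Gr.Walk x none, ∀ e ∈ W.edges, e ∉ F := by
    intro x
    match x with
    | none => exact ⟨Walk.nil, by simp⟩
    | some l => exact walk_to_root hF l
  obtain ⟨Wa, ha⟩ := h a
  obtain ⟨Wb, hb⟩ := h b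
  refine ⟨Wa.append Wb.reverse, ?_⟩
  intro e he
  rw [Walk.edges_append, List.mem_append] at he
  rcases he with he | he
  · exact ha e he
  · rw [Walk.edges_reverse, List.mem_reverse] at he
    exact hb e he

theorem infEdge : InfEdgeConnected Gr := by
  constructor
  · exact ⟨none, some [], by simp⟩
  · rintro a b hab ⟨F, hF, hsep⟩
    obtain ⟨W, hW⟩ := exists_walk_avoid hF a b
    obtain ⟨e, he, heF⟩ := hsep W
    exact hW e he heF

end Thm34
namespace Thm34

/-! ### Regions and their attachment pairs -/

/-- The region below the code `σ`: all codes having `σ` as a suffix. -/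
def Reg (σ : List ℕ) : Set Vx := {x | ∃ l, x = some l ∧ σ <:+ l}

lemma mem_reg {σ l : List ℕ} (h : σ <:+ l) : (some l : Vx) ∈ Reg σ := ⟨l, rfl, h⟩

lemma reg_len_eq {σ σ' : List ℕ} {z : Vx} (h : z ∈ Reg σ) (h' : z ∈ Reg σ')
    (hl : σ.length = σ'.length) : σ = σ' := by
  obtain ⟨l, rfl, hs⟩ := h
  obtain ⟨l', hzl, hs'⟩ := h'
  rw [Option.some.injEq] at hzl
  subst hzl
  obtain ⟨p, hp⟩ := hs
  obtain ⟨p', hp'⟩ := hs'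
  exact (List.append_inj' (hp.trans hp'.symm) hl).2

/-- Every edge leaving a region lands on one of its two attachment vertices. -/
lemma leave {σ : List ℕ} {x y : Vx} (hx : x ∈ Reg σ) (hadj : Gr.Adj x y) (hy : y ∉ Reg σ) :
    y = up σ ∨ y = up2 σ := by
  obtain ⟨l, rfl, hσl⟩ := hx
  obtain ⟨hne, h | h⟩ := hadj
  · obtain ⟨l', hl', hy'⟩ := h
    rw [Option.some.injEq] at hl'
    subst hl'
    rcases hy' with rfl | rfl
    · -- y = up l
      cases l with
      | nil =>
        rw [List.suffix_nil] at hσl; subst hσl; exact Or.inl rfl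
      | cons c t =>
        rcases List.suffix_cons_iff.mp hσl with h' | h'
        · subst h'; exact Or.inl rfl
        · exact absurd (mem_reg h') hy
    · -- y = up2 l
      cases l with
      | nil =>
        rw [List.suffix_nil] at hσl; subst hσl; exact Or.inr rfl
      | cons c t =>
        rcases List.suffix_cons_iff.mp hσl with h' | h'
        · subst h'; exact Or.inr rfl
        · cases t with
          | nil =>
            rw [List.suffix_nil] at h'; subst h'; exact Or.inl rfl
          | cons d t' =>
            rcases List.suffix_cons_iff.mp h' with h'' | h''
            · subst h''; exact Or.inl rfl
            · exact absurd (mem_reg h'') hy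
  · exfalso
    obtain ⟨l', rfl, hx'⟩ := h
    apply hy
    rcases hx' with hx' | hx'
    · cases l' with
      | nil => simp [up] at hx'
      | cons c t =>
        rw [up_cons, Option.some.injEq] at hx'
        subst hx'
        exact mem_reg (hσl.trans (List.suffix_cons c l))
    · cases l' with
      | nil => simp [up2] at hx'
      | cons c t =>
        cases t with
        | nil => simp [up2, up] at hx'
        | cons d t' =>
          rw [up2_cons, up_cons, Option.some.injEq] at hx'
          subst hx'
          exact mem_reg (hσl.trans ((List.suffix_cons d l).trans (List.suffix_cons c (d :: l))))

/-- Walks that avoid both attachment vertices of a region stay inside it. -/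
lemma stay {σ : List ℕ} {x y : Vx} (W : Gr.Walk x y) :
    x ∈ Reg σ → up σ ∉ W.support → up2 σ ∉ W.support → ∀ z ∈ W.support, z ∈ Reg σ := by
  induction W with
  | nil =>
    intro hx _ _ z hz
    rw [Walk.support_nil, List.mem_singleton] at hz
    subst hz; exact hx
  | @cons u v' w' hadj W ih =>
    intro hx h1 h2 z hz
    rw [Walk.support_cons] at hz h1 h2
    have h1' : up σ ∉ W.support := fun hh => h1 (List.mem_cons_of_mem _ hh)
    have h2' : up2 σ ∉ W.support := fun hh => h2 (List.mem_cons_of_mem _ hh)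
    have hv : v' ∈ Reg σ := by
      by_contra hc
      rcases leave hx hadj hc with h' | h'
      · exact h1 (h' ▸ List.mem_cons_of_mem _ W.start_mem_support)
      · exact h2 (h' ▸ List.mem_cons_of_mem _ W.start_mem_support)
    rcases List.mem_cons.mp hz with rfl | hz'
    · exact hx
    · exact ih hv h1' h2' z hz'

/-- A walk from inside a region to outside must pass through an attachment vertex. -/
lemma crossV {σ : List ℕ} {x y : Vx} (W : Gr.Walk x y) (hx : x ∈ Reg σ) (hy : y ∉ Reg σ) :
    up σ ∈ W.support ∨ up2 σ ∈ W.support := by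
  by_contra hc
  push_neg at hc
  exact hy (stay W hx hc.1 hc.2 y W.end_mem_support)

/-! ### Classification of neighbourhoods -/

lemma adj_none_class {z : Vx} (h : Gr.Adj none z) : z = some [] ∨ ∃ i, z = some [i] := by
  obtain ⟨hne, h | h⟩ := h
  · obtain ⟨l, hl, -⟩ := h
    exact absurd hl (by simp)
  · obtain ⟨l, rfl, h⟩ := h
    rcases h with h | h
    · cases l with
      | nil => exact Or.inl rfl
      | cons c t => simp [up] at h
    · cases l with
      | nil => exact Or.inl rfl
      | cons c t =>
        cases t with
        | nil => exact Or.inr ⟨c, rfl⟩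
        | cons d t' => simp [up2, up] at h
  
lemma adj_some_class {m : List ℕ} {z : Vx} (h : Gr.Adj (some m) z) :
    z = up m ∨ z = up2 m ∨ (∃ i, z = some (i :: m)) ∨ (∃ j i, z = some (j :: i :: m)) := by
  obtain ⟨hne, h | h⟩ := h
  · obtain ⟨l, hl, hz⟩ := h
    rw [Option.some.injEq] at hl
    subst hl
    rcases hz with rfl | rfl
    · exact Or.inl rfl
    · exact Or.inr (Or.inl rfl)
  · obtain ⟨l, rfl, hx⟩ := h
    rcases hx with hx | hx
    · cases l with
      | nil => simp [up] at hx
      | cons c t =>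
        rw [up_cons, Option.some.injEq] at hx
        subst hx
        exact Or.inr (Or.inr (Or.inl ⟨c, rfl⟩))
    · cases l with
      | nil => simp [up2] at hx
      | cons c t =>
        cases t with
        | nil => simp [up2, up] at hx
        | cons d t' =>
          rw [up2_cons, up_cons, Option.some.injEq] at hx
          subst hx
          exact Or.inr (Or.inr (Or.inr ⟨c, d, rfl⟩))

lemma walk_cons_of_ne {u v : Vx} (p : Gr.Walk u v) (h : u ≠ v) :
    ∃ (x : Vx) (ha : Gr.Adj u x) (q : Gr.Walk x v), p = Walk.cons ha q := by
  cases p with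
  | nil => exact absurd rfl h
  | cons ha q => exact ⟨_, ha, q, rfl⟩

end Thm34
namespace Thm34

/-- The key combinatorial lemma: the graph `Gr` contains no infinite "comb": a centre `w`
together with teeth `a n`, paths `R n` from `w` to the teeth meeting pairwise only in `w`,
and spine paths `Q n` joining consecutive teeth, avoiding `w`, and meeting each other only
when consecutive. -/
lemma no_comb (w : Vx) (a : ℕ → Vx)
    (hane : ∀ n, a n ≠ w)
    (R : ∀ n : ℕ, Gr.Walk w (a n)) (Q : ∀ n : ℕ, Gr.Walk (a n) (a (n + 1)))
    (hRpath : ∀ n, (R n).IsPath)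
    (hRR : ∀ m n, m ≠ n → ∀ z, z ∈ (R m).support → z ∈ (R n).support → z = w)
    (hQw : ∀ n, w ∉ (Q n).support)
    (hQQ : ∀ m n, m + 2 ≤ n → ∀ z, z ∈ (Q m).support → z ∈ (Q n).support → False) :
    False := by
  have tailR : ∀ y : Vx, y ≠ w → ∃ N, ∀ n, N ≤ n → y ∉ (R n).support := by
    intro y hy
    by_cases h : ∃ n, y ∈ (R n).support
    · obtain ⟨n₀, hn₀⟩ := h
      refine ⟨n₀ + 1, fun n hn hy' => ?_⟩
      exact hy (hRR n₀ n (by omega) y hn₀ hy')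
    · exact ⟨0, fun n _ hy' => h ⟨n, hy'⟩⟩
  have tailQ : ∀ y : Vx, ∃ N, ∀ n, N ≤ n → y ∉ (Q n).support := by
    intro y
    by_cases h : ∃ n, y ∈ (Q n).support
    · obtain ⟨n₀, hn₀⟩ := h
      exact ⟨n₀ + 2, fun n hn hy' => hQQ n₀ n hn y hn₀ hy'⟩
    · exact ⟨0, fun n _ hy' => h ⟨n, hy'⟩⟩
  have decomp : ∀ n, ∃ (x : Vx) (ha : Gr.Adj w x) (q : Gr.Walk x (a n)),
      (R n) = Walk.cons ha q := fun n => walk_cons_of_ne (R n) (Ne.symm (hane n))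
  cases w with
  | none =>
    obtain ⟨N₁, hN₁⟩ := tailR (some []) (by simp)
    obtain ⟨N₂, hN₂⟩ := tailQ (some [])
    set K := N₁ + N₂ with hK
    have main : ∀ n, K ≤ n → ∃ i, a n ∈ Reg [i] ∧ (some [i] : Vx) ∈ (R n).support := by
      intro n hn
      obtain ⟨x, ha, q, hq⟩ := decomp n
      have hxsup : x ∈ (R n).support := by
        rw [hq, Walk.support_cons]; exact List.mem_cons_of_mem _ q.start_mem_support
      have hqsup : ∀ z ∈ q.support, z ∈ (R n).support := by
        intro z hz; rw [hq, Walk.support_cons]; exact List.mem_cons_of_mem _ hz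
      have hwq : (none : Vx) ∉ q.support := by
        have hp := hRpath n; rw [hq, Walk.cons_isPath_iff] at hp; exact hp.2
      rcases adj_none_class ha with rfl | ⟨i, rfl⟩
      · exact absurd hxsup (hN₁ n (by omega))
      · refine ⟨i, ?_, hxsup⟩
        have h1q : up [i] ∉ q.support := by
          rw [up_cons]; intro hh; exact hN₁ n (by omega) (hqsup _ hh)
        have h2q : up2 [i] ∉ q.support := by
          rw [up2_cons, up_nil]; exact hwq
        exact stay q (mem_reg (List.suffix_refl _)) h1q h2q (a n) q.end_mem_support
    have uniq : ∀ (z : Vx) (i i' : ℕ), z ∈ Reg [i] → z ∈ Reg [i'] → i = i' := by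
      intro z i i' h h'
      have h2 := reg_len_eq h h' (by simp)
      injection h2
    obtain ⟨i1, hai1, hs1⟩ := main K le_rfl
    obtain ⟨i2, hai2, hs2⟩ := main (K + 1) (by omega)
    have hii : i1 = i2 := by
      by_contra hne
      have hnot : a (K + 1) ∉ Reg [i1] := fun hmem => hne (uniq _ _ _ hmem hai2)
      rcases crossV (Q K) hai1 hnot with hc | hc
      · rw [up_cons] at hc; exact hN₂ K (by omega) hc
      · rw [up2_cons, up_nil] at hc; exact hQw K hc
    subst hii
    exact nomatch (hRR K (K + 1) (by omega) _ hs1 hs2)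
  | some m =>
    obtain ⟨N₁, hN₁⟩ := tailR (up m) (up_ne_some m)
    obtain ⟨N₂, hN₂⟩ := tailR (up2 m) (up2_ne_some m)
    obtain ⟨N₃, hN₃⟩ := tailQ (up m)
    set N₀ := N₁ + N₂ + N₃ with hN₀
    have main : ∀ n, N₀ ≤ n → ∃ (i : ℕ) (x : Vx) (ha : Gr.Adj (some m) x)
        (q : Gr.Walk x (a n)), (R n) = Walk.cons ha q ∧
        (x = some (i :: m) ∨ ∃ j, x = some (j :: i :: m)) ∧ a n ∈ Reg (i :: m) := by
      intro n hn
      obtain ⟨x, ha, q, hq⟩ := decomp n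
      have hxsup : x ∈ (R n).support := by
        rw [hq, Walk.support_cons]; exact List.mem_cons_of_mem _ q.start_mem_support
      have hqsup : ∀ z ∈ q.support, z ∈ (R n).support := by
        intro z hz; rw [hq, Walk.support_cons]; exact List.mem_cons_of_mem _ hz
      have hwq : (some m : Vx) ∉ q.support := by
        have hp := hRpath n; rw [hq, Walk.cons_isPath_iff] at hp; exact hp.2
      rcases adj_some_class ha with rfl | rfl | ⟨i, rfl⟩ | ⟨j, i, rfl⟩
      · exact absurd hxsup (hN₁ n (by omega))
      · exact absurd hxsup (hN₂ n (by omega))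
      · refine ⟨i, some (i :: m), ha, q, hq, Or.inl rfl, ?_⟩
        have h1q : up (i :: m) ∉ q.support := by rw [up_cons]; exact hwq
        have h2q : up2 (i :: m) ∉ q.support := by
          rw [up2_cons]; intro hh; exact hN₁ n (by omega) (hqsup _ hh)
        exact stay q (mem_reg (List.suffix_refl _)) h1q h2q (a n) q.end_mem_support
      · refine ⟨i, some (j :: i :: m), ha, q, hq, Or.inr ⟨j, rfl⟩, ?_⟩
        have h1q : up (i :: m) ∉ q.support := by rw [up_cons]; exact hwq
        have h2q : up2 (i :: m) ∉ q.support := by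
          rw [up2_cons]; intro hh; exact hN₁ n (by omega) (hqsup _ hh)
        exact stay q (mem_reg (List.suffix_cons j (i :: m))) h1q h2q (a n) q.end_mem_support
    have uniq : ∀ (z : Vx) (i i' : ℕ), z ∈ Reg (i :: m) → z ∈ Reg (i' :: m) → i = i' := by
      intro z i i' h h'
      have h2 := reg_len_eq h h' (by simp)
      injection h2
    obtain ⟨i0, x0, ha0, q0, hq0, hsh0, hi0⟩ := main N₀ le_rfl
    have const : ∀ n (hn : N₀ ≤ n), a n ∈ Reg (i0 :: m) := by
      intro n hn
      induction n, hn using Nat.le_induction with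
      | base => exact hi0
      | succ n hn ih =>
        obtain ⟨i, x, ha, q, hq, hsh, hai⟩ := main (n + 1) (by omega)
        rcases eq_or_ne i i0 with rfl | hii
        · exact hai
        · exfalso
          have hnot : a (n + 1) ∉ Reg (i0 :: m) := fun hmem => hii (uniq _ _ _ hai hmem)
          rcases crossV (Q n) ih hnot with hc | hc
          · rw [up_cons] at hc; exact hQw n hc
          · rw [up2_cons] at hc; exact hN₃ n (by omega) hc
    obtain ⟨M₁, hM₁⟩ := tailR (some (i0 :: m)) (fun h => List.cons_ne_self i0 m (by simpa using h))
    obtain ⟨M₂, hM₂⟩ := tailQ (some (i0 :: m))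
    set K := N₀ + M₁ + M₂ with hKdef
    have main2 : ∀ n, K ≤ n →
        ∃ j, a n ∈ Reg (j :: i0 :: m) ∧ (some (j :: i0 :: m) : Vx) ∈ (R n).support := by
      intro n hn
      obtain ⟨i, x, ha, q, hq, hsh, hai⟩ := main n (by omega)
      have hii : i = i0 := uniq _ _ _ hai (const n (by omega))
      subst hii
      have hxsup : x ∈ (R n).support := by
        rw [hq, Walk.support_cons]; exact List.mem_cons_of_mem _ q.start_mem_support
      have hqsup : ∀ z ∈ q.support, z ∈ (R n).support := by
        intro z hz; rw [hq, Walk.support_cons]; exact List.mem_cons_of_mem _ hz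
      have hwq : (some m : Vx) ∉ q.support := by
        have hp := hRpath n; rw [hq, Walk.cons_isPath_iff] at hp; exact hp.2
      rcases hsh with rfl | ⟨j, rfl⟩
      · exact absurd hxsup (hM₁ n (by omega))
      · refine ⟨j, ?_, hxsup⟩
        have h1q : up (j :: i :: m) ∉ q.support := by
          rw [up_cons]; intro hh; exact hM₁ n (by omega) (hqsup _ hh)
        have h2q : up2 (j :: i :: m) ∉ q.support := by
          rw [up2_cons, up_cons]; exact hwq
        exact stay q (mem_reg (List.suffix_refl _)) h1q h2q (a n) q.end_mem_support
    have uniq2 : ∀ (z : Vx) (j j' : ℕ), z ∈ Reg (j :: i0 :: m) → z ∈ Reg (j' :: i0 :: m) →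
        j = j' := by
      intro z j j' h h'
      have h2 := reg_len_eq h h' (by simp)
      injection h2
    obtain ⟨j1, haj1, hs1⟩ := main2 K le_rfl
    obtain ⟨j2, haj2, hs2⟩ := main2 (K + 1) (by omega)
    have hjj : j1 = j2 := by
      by_contra hne
      have hnot : a (K + 1) ∉ Reg (j1 :: i0 :: m) := fun hmem => hne (uniq2 _ _ _ hmem haj2)
      rcases crossV (Q K) haj1 hnot with hc | hc
      · rw [up_cons] at hc; exact hM₂ K (by omega) hc
      · rw [up2_cons, up_cons] at hc; exact hQw K hc
    subst hjj
    have hcontra := hRR K (K + 1) (by omega) _ hs1 hs2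
    rw [Option.some.injEq] at hcontra
    have hlen := congrArg List.length hcontra
    simp only [List.length_cons] at hlen
    omega

end Thm34
namespace Thm34

/-! ### Extraction of combs from topological minors -/

lemma farey_adj_none {r : ℚ} (h : r.den = 1) : fareyGraph.Adj none (some r) := h

lemma farey_adj_some {q r : ℚ} (h : (q.num * (r.den : ℤ) - r.num * (q.den : ℤ)).natAbs = 1) :
    fareyGraph.Adj (some q) (some r) := h

lemma not_top_farey : ¬ IsTopMinor Gr fareyGraph := by
  rintro ⟨f, finj, p, hpath, hbranch, hdisj⟩
  have hA : ∀ n : ℕ, fareyGraph.Adj none (some ((n : ℚ))) :=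
    fun n => farey_adj_none (Rat.den_natCast n)
  have hB : ∀ n : ℕ, fareyGraph.Adj (some ((n : ℚ))) (some (((n + 1 : ℕ) : ℚ))) := by
    intro n
    apply farey_adj_some
    simp only [Rat.num_natCast, Rat.den_natCast]
    push_cast
    omega
  have hqinj : ∀ m n : ℕ, ((m : ℚ)) = ((n : ℚ)) → m = n := fun m n h => Nat.cast_injective h
  refine no_comb (f none) (fun n => f (some ((n : ℚ))))
    (fun n h => by simpa using finj h)
    (fun n => p (hA n)) (fun n => p (hB n)) (fun n => hpath (hA n)) ?_ ?_ ?_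
  · -- paths of the fan meet only in the centre
    intro m n hmn z h1 h2
    have hne : (s((none : Option ℚ), some ((m : ℚ)))) ≠ s(none, some ((n : ℚ))) := by
      intro h
      rw [Sym2.eq_iff] at h
      rcases h with ⟨-, h⟩ | ⟨h, -⟩
      · rw [Option.some.injEq] at h; exact hmn (hqinj _ _ h)
      · exact nomatch h
    have h3 := hdisj (hA m) (hA n) hne z h1 h2
    rcases h3 with ⟨hz1 | hz1, hz2 | hz2⟩
    · exact hz1
    · exact hz1
    · exact hz2
    · exfalso
      have h4 := finj (hz1.symm.trans hz2)
      rw [Option.some.injEq] at h4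
      exact hmn (hqinj _ _ h4)
  · -- the centre is not on the spine
    intro n hw
    rcases hbranch (hB n) none hw with h | h <;> exact nomatch h
  · -- distant spine paths are disjoint
    intro m n hmn z h1 h2
    have hne : (s(some ((m : ℚ)), some (((m + 1 : ℕ) : ℚ)))) ≠
        s(some ((n : ℚ)), some (((n + 1 : ℕ) : ℚ))) := by
      intro h
      rw [Sym2.eq_iff] at h
      rcases h with ⟨h1', -⟩ | ⟨h1', -⟩ <;>
        · rw [Option.some.injEq] at h1'
          have := hqinj _ _ h1'
          omega
    have h3 := hdisj (hB m) (hB n) hne z h1 h2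
    rcases h3 with ⟨hz1 | hz1, hz2 | hz2⟩ <;>
      · have h4 := finj (hz1.symm.trans hz2)
        rw [Option.some.injEq] at h4
        have := hqinj _ _ h4
        omega

lemma T_adj_none (l : List ℕ) : TAleph0Star.Adj none (some l) := trivial

lemma T_adj_some {x y : List ℕ} (h : TAleph0.Adj x y) : TAleph0Star.Adj (some x) (some y) := h

lemma not_top_T : ¬ IsTopMinor Gr TAleph0Star := by
  rintro ⟨f, finj, p, hpath, hbranch, hdisj⟩
  have hrinj : ∀ m n : ℕ, List.replicate m (0 : ℕ) = List.replicate n 0 → m = n := by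
    intro m n h
    have := congrArg List.length h
    simpa using this
  have hA : ∀ n : ℕ, TAleph0Star.Adj none (some (List.replicate n 0)) :=
    fun n => T_adj_none _
  have hB : ∀ n : ℕ, TAleph0Star.Adj (some (List.replicate n 0))
      (some (List.replicate (n + 1) 0)) := by
    intro n
    exact T_adj_some (Or.inr ⟨0, List.replicate_succ⟩)
  refine no_comb (f none) (fun n => f (some (List.replicate n 0)))
    (fun n h => by simpa using finj h)
    (fun n => p (hA n)) (fun n => p (hB n)) (fun n => hpath (hA n)) ?_ ?_ ?_
  · intro m n hmn z h1 h2
    have hne : (s((none : Option (List ℕ)), some (List.replicate m 0))) ≠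
        s(none, some (List.replicate n 0)) := by
      intro h
      rw [Sym2.eq_iff] at h
      rcases h with ⟨-, h⟩ | ⟨h, -⟩
      · rw [Option.some.injEq] at h; exact hmn (hrinj _ _ h)
      · exact nomatch h
    have h3 := hdisj (hA m) (hA n) hne z h1 h2
    rcases h3 with ⟨hz1 | hz1, hz2 | hz2⟩
    · exact hz1
    · exact hz1
    · exact hz2
    · exfalso
      have h4 := finj (hz1.symm.trans hz2)
      rw [Option.some.injEq] at h4
      exact hmn (hrinj _ _ h4)
  · intro n hw
    rcases hbranch (hB n) none hw with h | h <;> exact nomatch h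
  · intro m n hmn z h1 h2
    have hne : (s(some (List.replicate m (0:ℕ)), some (List.replicate (m + 1) 0))) ≠
        s(some (List.replicate n 0), some (List.replicate (n + 1) 0)) := by
      intro h
      rw [Sym2.eq_iff] at h
      rcases h with ⟨h1', -⟩ | ⟨h1', -⟩ <;>
        · rw [Option.some.injEq] at h1'
          have := hrinj _ _ h1'
          omega
    have h3 := hdisj (hB m) (hB n) hne z h1 h2
    rcases h3 with ⟨hz1 | hz1, hz2 | hz2⟩ <;>
      · have h4 := finj (hz1.symm.trans hz2)
        rw [Option.some.injEq] at h4
        have := hrinj _ _ h4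
        omega

end Thm34

/-- **Theorem 3.4.** There exists an infinitely edge-connected graph that contains neither
the Farey graph nor `T_ℵ₀ * t` as a topological minor. -/
theorem exists_infEdgeConnected_no_topMinor :
    ∃ (V : Type) (G : SimpleGraph V), InfEdgeConnected G ∧
      ¬ IsTopMinor G fareyGraph ∧ ¬ IsTopMinor G TAleph0Star :=
  ⟨Thm34.Vx, Thm34.Gr, Thm34.infEdge, Thm34.not_top_farey, Thm34.not_top_T⟩
end

section
/- Suppose that G is a connected graph, that σ = {(A_i, B_i) : i ∈ I} is an infinite star of separations in B_{ℵ0}(G), and that i_* ∈ I is given. Then there is an infinite subset J ⊆ I containing i_* such that the part ∩_{j∈J} B_j of the infinite substar {(A_j, B_j) : j ∈ J} induces a connected subgraph of G. -/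
open SimpleGraph

universe u v

namespace Lemma52

variable {V : Type u} {G : SimpleGraph V}

lemma compl_of_bond {A B : Set V} (h : IsFinBondOrientation G A B) : B = Aᶜ := by
  ext x
  constructor
  · intro hx hxA
    exact Set.disjoint_left.mp h.2.1 hxA hx
  · intro hx
    have := Set.eq_univ_iff_forall.mp h.1 x
    rcases this with h' | h'
    · exact absurd h' hx
    · exact h'

/-- attachment set: the `B`-side endvertices of the cut of `p`. -/
def att (G : SimpleGraph V) (p : Set V × Set V) : Set V :=
  {b | b ∈ p.2 ∧ ∃ a ∈ p.1, G.Adj a b}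

lemma att_finite {p : Set V × Set V} (h : (cutEdgesBetween G p.1 p.2).Finite) :
    (att G p).Finite := by
  have hsub : att G p ⊆ ⋃ e ∈ cutEdgesBetween G p.1 p.2, {v | v ∈ e} := by
    rintro b ⟨hb2, a, ha, hadj⟩
    exact Set.mem_biUnion ⟨a, ha, b, hb2, hadj, rfl⟩ (by simp)
  refine Set.Finite.subset (Set.Finite.biUnion h ?_) hsub
  intro e _
  induction e using Sym2.ind with
  | _ x y =>
    have : {v | v ∈ s(x, y)} = {x, y} := by
      ext v; simp [Sym2.mem_iff]
    rw [this]
    exact (Set.finite_singleton y).insert x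

lemma att_nonempty {p : Set V × Set V} (h : (cutEdgesBetween G p.1 p.2).Nonempty) :
    (att G p).Nonempty := by
  obtain ⟨e, a, ha, b, hb, hadj, rfl⟩ := h
  exact ⟨b, hb, a, ha, hadj⟩

lemma reachable_induce_of_walk {S : Set V} :
    ∀ {a b : V} (w : G.Walk a b), (∀ z ∈ w.support, z ∈ S) →
      ∀ (ha : a ∈ S) (hb : b ∈ S), (G.induce S).Reachable ⟨a, ha⟩ ⟨b, hb⟩ := by
  intro a b w
  induction w with
  | nil =>
    intro _ ha hb
    exact Reachable.refl _
  | @cons a c b h p ih =>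
    intro hs ha hb
    have hc : c ∈ S := hs c (by simp)
    have hadj : (G.induce S).Adj ⟨a, ha⟩ ⟨c, hc⟩ := h
    exact hadj.reachable.trans
      (ih (fun z hz => hs z (by rw [Walk.support_cons]; exact List.mem_cons_of_mem _ hz)) hc hb)

lemma exists_walk_of_induce_walk {S : Set V} :
    ∀ {a b : ↥S} (_ : (G.induce S).Walk a b),
      ∃ w' : G.Walk a.1 b.1, ∀ z ∈ w'.support, z ∈ S := by
  intro a b w
  induction w with
  | nil => exact ⟨Walk.nil, by simpa using a.2⟩
  | @cons a c b h p ih =>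
    obtain ⟨w', hw'⟩ := ih
    refine ⟨Walk.cons (show G.Adj a.1 c.1 from h) w', ?_⟩
    intro z hz
    rw [Walk.support_cons] at hz
    rcases List.mem_cons.mp hz with rfl | hz
    · exact a.2
    · exact hw' z hz

lemma exists_connector {D : Set V} (hconn : (G.induce D).Connected) {N : Set V}
    (hN : N.Finite) (hND : N ⊆ D) :
    ∃ Z : Set V, Z.Finite ∧ Z ⊆ D ∧
      ∀ u ∈ N, ∀ u' ∈ N, ∃ w : G.Walk u u', ∀ z ∈ w.support, z ∈ Z := by
  classical
  have h1 : ∀ u ∈ N, ∀ u' ∈ N, ∃ w : G.Walk u u', ∀ z ∈ w.support, z ∈ D := by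
    intro u hu u' hu'
    obtain ⟨w⟩ := hconn.preconnected ⟨u, hND hu⟩ ⟨u', hND hu'⟩
    exact exists_walk_of_induce_walk w
  choose w hw using h1
  classical
  let Z : V → V → Set V := fun u u' =>
    if h : u ∈ N ∧ u' ∈ N then {z | z ∈ (w u h.1 u' h.2).support} else ∅
  have hZ : ∀ u u', (Z u u').Finite := by
    intro u u'
    by_cases h : u ∈ N ∧ u' ∈ N
    · simp only [Z, dif_pos h]
      exact (w u h.1 u' h.2).support.finite_toSet
    · simp only [Z, dif_neg h]
      exact Set.finite_empty
  refine ⟨⋃ u ∈ N, ⋃ u' ∈ N, Z u u', ?_, ?_, ?_⟩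
  · exact hN.biUnion fun u _ => hN.biUnion fun u' _ => hZ u u'
  · intro z hz
    simp only [Set.mem_iUnion] at hz
    obtain ⟨u, hu, u', hu', hz⟩ := hz
    have : Z u u' = {z | z ∈ (w u hu u' hu').support} := dif_pos ⟨hu, hu'⟩
    rw [this] at hz
    exact hw u hu u' hu' z hz
  · intro u hu u' hu'
    refine ⟨w u hu u' hu', fun z hz => ?_⟩
    simp only [Set.mem_iUnion]
    refine ⟨u, hu, u', hu', ?_⟩
    have : Z u u' = {z | z ∈ (w u hu u' hu').support} := dif_pos ⟨hu, hu'⟩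
    rw [this]
    exact hz

lemma bridging {D : Set V} {I : Set (Set V × Set V)}
    (hdisj : ∀ p ∈ I, ∀ a ∈ p.1, a ∉ D)
    (hcross : ∀ p ∈ I, ∀ q ∈ I, p ≠ q → ∀ a ∈ p.1, ∀ b ∈ q.1, ¬ G.Adj a b)
    (hbridge : ∀ p ∈ I, ∀ (a : V) (ha : a ∈ D) (b : V) (hb : b ∈ D),
      (∃ a' ∈ p.1, G.Adj a' a) → (∃ b' ∈ p.1, G.Adj b' b) →
      (G.induce D).Reachable ⟨a, ha⟩ ⟨b, hb⟩) :
    ∀ {x y : V} (w : G.Walk x y), (∀ z ∈ w.support, z ∈ D ∨ ∃ p ∈ I, z ∈ p.1) →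
      ∀ (hx : x ∈ D) (hy : y ∈ D), (G.induce D).Reachable ⟨x, hx⟩ ⟨y, hy⟩ := by
  suffices H : ∀ {x y : V} (w : G.Walk x y),
      (∀ z ∈ w.support, z ∈ D ∨ ∃ p ∈ I, z ∈ p.1) → ∀ hy : y ∈ D,
      (∀ hx : x ∈ D, (G.induce D).Reachable ⟨x, hx⟩ ⟨y, hy⟩) ∧
      (∀ p ∈ I, x ∈ p.1 → ∃ (b : V) (hb : b ∈ D),
        (∃ b' ∈ p.1, G.Adj b' b) ∧ (G.induce D).Reachable ⟨b, hb⟩ ⟨y, hy⟩) by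
    intro x y w hs hx hy
    exact (H w hs hy).1 hx
  intro x y w
  induction w with
  | nil =>
    intro _ hy
    refine ⟨fun hx => Reachable.refl _, fun p hp hxp => absurd hy (hdisj p hp _ hxp)⟩
  | @cons a c b h p ih =>
    intro hs hy
    have hs' : ∀ z ∈ p.support, z ∈ D ∨ ∃ q ∈ I, z ∈ q.1 := fun z hz =>
      hs z (by rw [Walk.support_cons]; exact List.mem_cons_of_mem _ hz)
    have IH := ih hs' hy
    have hcmem : c ∈ D ∨ ∃ q ∈ I, c ∈ q.1 := hs' c (Walk.start_mem_support p)
    constructor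
    · intro hx
      rcases hcmem with hc | ⟨q, hq, hcq⟩
      · have hadj : (G.induce D).Adj ⟨a, hx⟩ ⟨c, hc⟩ := h
        exact hadj.reachable.trans (IH.1 hc)
      · obtain ⟨b', hb', ⟨b'', hb'', hadj''⟩, hr⟩ := IH.2 q hq hcq
        exact (hbridge q hq a hx b' hb' ⟨c, hcq, h.symm⟩ ⟨b'', hb'', hadj''⟩).trans hr
    · intro q hq hxq
      rcases hcmem with hc | ⟨q', hq', hcq'⟩
      · exact ⟨c, hc, ⟨a, hxq, h⟩, IH.1 hc⟩
      · by_cases hqq : q = q'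
        · subst hqq
          exact IH.2 q hq hcq'
        · exact absurd h (hcross q hq q' hq' hqq a hxq c hcq')

structure St (G : SimpleGraph V) (σ : Set (Set V × Set V)) (s₀ : Set V × Set V) where
  tau : Set (Set V × Set V)
  fin : tau.Finite
  sub : tau ⊆ σ
  mem0 : s₀ ∈ tau
  P : Set V
  Pfin : P.Finite
  Psub : P ⊆ (⋃ p ∈ tau, p.1)ᶜ
  conn : (G.induce ((⋃ p ∈ tau, p.1)ᶜ)).Connected
  hatt : ∀ p ∈ tau, att G p ⊆ (⋃ q ∈ tau, q.1)ᶜ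
  hwalks : ∀ p ∈ tau, ∀ a ∈ att G p, ∀ b ∈ att G p,
    ∃ w : G.Walk a b, ∀ z ∈ w.support, z ∈ P

variable {σ : Set (Set V × Set V)} {s₀ : Set V × Set V}

def StepRel (st st' : St G σ s₀) : Prop :=
  ∃ q, q ∈ σ ∧ q ∉ st.tau ∧ st'.tau = insert q st.tau ∧ st.P ⊆ st'.P ∧
    q.1 ∩ (st.P ∪ ⋃ p ∈ st.tau, att G p) = ∅

lemma step_exists (hinf : σ.Infinite)
    (hbond : ∀ p ∈ σ, IsFinBondOrientation G p.1 p.2)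
    (hstar : ∀ p ∈ σ, ∀ q ∈ σ, p ≠ q → p.1 ⊆ q.2)
    (st : St G σ s₀) : ∃ st', StepRel st st' := by
  classical
  set part : Set V := (⋃ p ∈ st.tau, p.1)ᶜ with hpart
  set N : Set V := ⋃ p ∈ st.tau, att G p with hN
  have hNfin : N.Finite :=
    st.fin.biUnion fun p hp => att_finite (hbond p (st.sub hp)).2.2.2.1
  have hNsub : N ⊆ part := Set.iUnion₂_subset st.hatt
  have hNne : N.Nonempty := by
    obtain ⟨b, hb⟩ := att_nonempty (hbond s₀ (st.sub st.mem0)).2.2.1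
    exact ⟨b, Set.mem_biUnion st.mem0 hb⟩
  obtain ⟨Z, hZfin, hZsub, hZw⟩ := exists_connector st.conn hNfin hNsub
  set W : Set V := st.P ∪ N ∪ Z with hW
  have hWfin : W.Finite := (st.Pfin.union hNfin).union hZfin
  -- the bad separations: those meeting `W`
  set Bad : Set (Set V × Set V) := {q | q ∈ σ ∧ (q.1 ∩ W).Nonempty} with hBad
  have hBadfin : Bad.Finite := by
    have hfdef : ∀ q ∈ Bad, ∃ v, v ∈ q.1 ∩ W := fun q hq => hq.2
    let f : Set V × Set V → V := fun q =>
      if h2 : (q.1 ∩ W).Nonempty then h2.some else hNne.some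
    have hfmem : ∀ q ∈ Bad, f q ∈ q.1 ∩ W := by
      intro q hq
      have : f q = (hq.2 : (q.1 ∩ W).Nonempty).some := dif_pos hq.2
      rw [this]
      exact hq.2.some_mem
    refine Set.Finite.of_finite_image (f := f) (Set.Finite.subset hWfin ?_) ?_
    · rintro v ⟨p, hp, rfl⟩
      exact (hfmem p hp).2
    · rintro p hp p' hp' hEq
      by_contra hne
      have h1 : f p ∈ p.1 := (hfmem p hp).1
      have h2 : f p' ∈ p'.1 := (hfmem p' hp').1
      have hsub : p.1 ⊆ p'.2 := hstar p hp.1 p' hp'.1 hne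
      have hc : f p ∈ p'.1ᶜ := by
        rw [← compl_of_bond (hbond p' hp'.1)]
        exact hsub h1
      rw [hEq] at hc
      exact hc h2
  -- pick a good new separation q
  obtain ⟨q, hq⟩ := (hinf.diff (st.fin.union hBadfin)).nonempty
  have hqσ : q ∈ σ := hq.1
  have hqtau : q ∉ st.tau := fun h => hq.2 (Set.mem_union_left _ h)
  have hqW : q.1 ∩ W = ∅ := by
    by_contra h
    exact hq.2 (Set.mem_union_right _ ⟨hqσ, Set.nonempty_iff_ne_empty.mpr h⟩)
  have hq2 : q.2 = q.1ᶜ := compl_of_bond (hbond q hqσ)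
  set D : Set V := (⋃ p ∈ insert q st.tau, p.1)ᶜ with hD
  have hDeq : D = part ∩ q.1ᶜ := by
    rw [hD, Set.biUnion_insert, Set.compl_union, hpart, Set.inter_comm]
  have hdisjW : ∀ v ∈ W, v ∉ q.1 := by
    intro v hv hvq
    exact absurd (Set.mem_inter hvq hv) (by rw [hqW]; exact fun h => h)
  have hZD : Z ⊆ D := by
    intro z hz
    rw [hDeq]
    exact ⟨hZsub hz, hdisjW z (Set.mem_union_right _ hz) ⟩
  have hND : N ⊆ D := by
    intro z hz
    rw [hDeq]
    exact ⟨hNsub hz, hdisjW z (Set.mem_union_left _ (Set.mem_union_right _ hz))⟩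
  have hPD : st.P ⊆ D := by
    intro z hz
    rw [hDeq]
    exact ⟨st.Psub hz, hdisjW z (Set.mem_union_left _ (Set.mem_union_left _ hz))⟩
  have hpart_sub : ∀ p ∈ st.tau, part ⊆ p.2 := by
    intro p hp
    rw [compl_of_bond (hbond p (st.sub hp))]
    intro z hz hzp
    exact hz (Set.mem_biUnion hp hzp)
  -- connectivity of the new part D
  have hDconn : (G.induce D).Connected := by
    rw [connected_iff]
    constructor
    · rintro ⟨x, hx⟩ ⟨y, hy⟩
      have hxq2 : x ∈ q.2 := by rw [hq2]; exact (hDeq ▸ hx).2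
      have hyq2 : y ∈ q.2 := by rw [hq2]; exact (hDeq ▸ hy).2
      obtain ⟨w⟩ := (hbond q hqσ).2.2.2.2.2.preconnected ⟨x, hxq2⟩ ⟨y, hyq2⟩
      obtain ⟨w', hw'⟩ := exists_walk_of_induce_walk w
      refine bridging (I := st.tau) ?_ ?_ ?_ w' ?_ hx hy
      · intro p hp a ha haD
        exact ((hDeq ▸ haD).1 : a ∈ part) (Set.mem_biUnion hp ha)
      · intro p hp p' hp' hne a ha b hb hadj
        have hbatt : b ∈ att G p := by
          refine ⟨hstar p' (st.sub hp') p (st.sub hp) hne.symm hb, a, ha, hadj⟩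
        have : b ∈ part := st.hatt p hp hbatt
        exact this (Set.mem_biUnion hp' hb)
      · intro p hp a ha b hb ⟨a', ha', hadja⟩ ⟨b', hb', hadjb⟩
        have haatt : a ∈ att G p :=
          ⟨hpart_sub p hp (hDeq ▸ ha).1, a', ha', hadja⟩
        have hbatt : b ∈ att G p :=
          ⟨hpart_sub p hp (hDeq ▸ hb).1, b', hb', hadjb⟩
        obtain ⟨wab, hwab⟩ := hZw a (Set.mem_biUnion hp haatt) b (Set.mem_biUnion hp hbatt)
        exact reachable_induce_of_walk wab (fun z hz => hZD (hwab z hz)) ha hb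
      · intro z hz
        have hzq2 : z ∈ q.2 := hw' z hz
        by_cases hzD : z ∈ D
        · exact Or.inl hzD
        · right
          have hznp : z ∉ part := by
            intro hzp
            exact hzD (hDeq ▸ ⟨hzp, hq2 ▸ hzq2⟩)
          have : z ∈ ⋃ p ∈ st.tau, p.1 := by
            by_contra h
            exact hznp h
          simpa using this
    · obtain ⟨n₀, hn₀⟩ := hNne
      exact ⟨⟨n₀, hND hn₀⟩⟩
  -- attachment set of q lies in D
  have hattqD : att G q ⊆ D := by
    rintro b ⟨hb2, a, ha, hadj⟩
    rw [hDeq]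
    refine ⟨?_, hq2 ▸ hb2⟩
    by_contra hbp
    have : b ∈ ⋃ p ∈ st.tau, p.1 := by
      by_contra h
      exact hbp h
    simp only [Set.mem_iUnion] at this
    obtain ⟨p, hp, hbp1⟩ := this
    have hqnep : q ≠ p := fun h => hqtau (h ▸ hp)
    have haattp : a ∈ att G p :=
      ⟨hstar q hqσ p (st.sub hp) hqnep ha, b, hbp1, hadj.symm⟩
    exact hdisjW a (Set.mem_union_left _ (Set.mem_union_right _
      (Set.mem_biUnion hp haattp))) ha
  have hattqfin : (att G q).Finite := att_finite (hbond q hqσ).2.2.2.1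
  obtain ⟨Z', hZ'fin, hZ'sub, hZ'w⟩ := exists_connector hDconn hattqfin hattqD
  refine ⟨⟨insert q st.tau, st.fin.insert q, Set.insert_subset hqσ st.sub,
    Set.mem_insert_of_mem _ st.mem0, st.P ∪ Z', st.Pfin.union hZ'fin, ?_, hDconn, ?_, ?_⟩,
    q, hqσ, hqtau, rfl, Set.subset_union_left, ?_⟩
  · exact Set.union_subset hPD hZ'sub
  · intro p hp
    rcases Set.mem_insert_iff.mp hp with rfl | hp
    · exact hattqD
    · intro b hb
      rw [← hD, hDeq]
      exact ⟨st.hatt p hp hb, hdisjW b (Set.mem_union_left _ (Set.mem_union_right _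
        (Set.mem_biUnion hp hb))) ⟩
  · intro p hp a ha b hb
    rcases Set.mem_insert_iff.mp hp with rfl | hp
    · obtain ⟨w, hw⟩ := hZ'w a ha b hb
      exact ⟨w, fun z hz => Set.mem_union_right _ (hw z hz)⟩
    · obtain ⟨w, hw⟩ := st.hwalks p hp a ha b hb
      exact ⟨w, fun z hz => Set.mem_union_left _ (hw z hz)⟩
  · rw [Set.eq_empty_iff_forall_notMem]
    rintro v ⟨hv1, hv2⟩
    refine hdisjW v ?_ hv1
    rcases hv2 with h | h
    · exact Set.mem_union_left _ (Set.mem_union_left _ h)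
    · exact Set.mem_union_left _ (Set.mem_union_right _ h)

lemma init_exists (hbond : ∀ p ∈ σ, IsFinBondOrientation G p.1 p.2)
    (hs₀ : s₀ ∈ σ) : ∃ st : St G σ s₀, st.tau = {s₀} := by
  classical
  have hcompl : (⋃ p ∈ ({s₀} : Set (Set V × Set V)), p.1)ᶜ = s₀.2 := by
    rw [Set.biUnion_singleton, ← compl_of_bond (hbond s₀ hs₀)]
  have hconn0 : (G.induce ((⋃ p ∈ ({s₀} : Set (Set V × Set V)), p.1)ᶜ)).Connected := by
    rw [hcompl]
    exact (hbond s₀ hs₀).2.2.2.2.2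
  have hatt0 : att G s₀ ⊆ (⋃ p ∈ ({s₀} : Set (Set V × Set V)), p.1)ᶜ := by
    rw [hcompl]
    exact fun b hb => hb.1
  obtain ⟨Z, hZfin, hZsub, hZw⟩ :=
    exists_connector hconn0 (att_finite (hbond s₀ hs₀).2.2.2.1) hatt0
  refine ⟨⟨{s₀}, Set.finite_singleton _, Set.singleton_subset_iff.mpr hs₀, rfl,
    Z, hZfin, hZsub, hconn0, ?_, ?_⟩, rfl⟩
  · intro p hp
    rcases hp with rfl
    exact hatt0
  · intro p hp a ha b hb
    rcases hp with rfl
    exact hZw a ha b hb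

theorem main {V : Type u} (G : SimpleGraph V)
    (hconn : G.Connected) (σ : Set (Set V × Set V)) (hinf : σ.Infinite)
    (hbond : ∀ p ∈ σ, IsFinBondOrientation G p.1 p.2)
    (hstar : ∀ p ∈ σ, ∀ q ∈ σ, p ≠ q → p.1 ⊆ q.2)
    (s₀ : Set V × Set V) (hs₀ : s₀ ∈ σ) :
    ∃ τ ⊆ σ, τ.Infinite ∧ s₀ ∈ τ ∧ (G.induce (⋂ p ∈ τ, p.2)).Connected := by
  classical
  obtain ⟨st₀, hst₀⟩ := init_exists (G := G) hbond hs₀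
  have hstep := step_exists (G := G) (s₀ := s₀) hinf hbond hstar
  let chain : ℕ → St G σ s₀ := fun n => Nat.rec st₀ (fun _ st => Classical.choose (hstep st)) n
  have hchain : ∀ n, StepRel (chain n) (chain (n + 1)) :=
    fun n => Classical.choose_spec (hstep (chain n))
  have htmono1 : ∀ n, (chain n).tau ⊆ (chain (n + 1)).tau := by
    intro n
    obtain ⟨q, -, -, heq, -, -⟩ := hchain n
    rw [heq]
    exact Set.subset_insert _ _
  have htmono : ∀ m n, m ≤ n → (chain m).tau ⊆ (chain n).tau := by
    intro m n h
    induction h with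
    | refl => exact subset_rfl
    | step h ih => exact ih.trans (htmono1 _)
  have hPmono1 : ∀ n, (chain n).P ⊆ (chain (n + 1)).P := by
    intro n
    obtain ⟨q, -, -, -, hP, -⟩ := hchain n
    exact hP
  have hPmono : ∀ m n, m ≤ n → (chain m).P ⊆ (chain n).P := by
    intro m n h
    induction h with
    | refl => exact subset_rfl
    | step h ih => exact ih.trans (hPmono1 _)
  set τ : Set (Set V × Set V) := ⋃ n, (chain n).tau with hτ
  have hτσ : τ ⊆ σ := by
    intro p hp
    obtain ⟨n, hn⟩ := Set.mem_iUnion.mp hp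
    exact (chain n).sub hn
  have hs0τ : s₀ ∈ τ := Set.mem_iUnion.mpr ⟨0, (chain 0).mem0⟩
  -- infinitude
  let qf : ℕ → Set V × Set V := fun n => Classical.choose (hchain n)
  have hqf : ∀ n, qf n ∈ σ ∧ qf n ∉ (chain n).tau ∧
      (chain (n + 1)).tau = insert (qf n) (chain n).tau ∧ (chain n).P ⊆ (chain (n + 1)).P ∧
      (qf n).1 ∩ ((chain n).P ∪ ⋃ p ∈ (chain n).tau, att G p) = ∅ :=
    fun n => Classical.choose_spec (hchain n)
  have hqmem : ∀ n, qf n ∈ (chain (n + 1)).tau := by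
    intro n
    rw [(hqf n).2.2.1]
    exact Set.mem_insert _ _
  have hinj : Function.Injective qf := by
    intro m n hEq
    by_contra hne
    rcases Nat.lt_or_ge m n with h | h
    · have : qf m ∈ (chain n).tau := htmono (m + 1) n h (hqmem m)
      rw [hEq] at this
      exact (hqf n).2.1 this
    · have hlt : n < m := lt_of_le_of_ne h (Ne.symm fun hEq' => hne (by rw [hEq']))
      have : qf n ∈ (chain m).tau := htmono (n + 1) m hlt (hqmem n)
      rw [← hEq] at this
      exact (hqf m).2.1 this
  have hτinf : τ.Infinite :=
    Set.infinite_of_injective_forall_mem hinj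
      (fun n => Set.mem_iUnion.mpr ⟨n + 1, hqmem n⟩)
  -- the part
  set part : Set V := (⋃ p ∈ τ, p.1)ᶜ with hpart
  have hpart_eq : (⋂ p ∈ τ, p.2) = part := by
    ext x
    simp only [Set.mem_iInter, hpart, Set.mem_compl_iff, Set.mem_iUnion]
    constructor
    · rintro h ⟨p, hp, hxp⟩
      have hx2 := h p hp
      rw [compl_of_bond (hbond p (hτσ hp))] at hx2
      exact hx2 hxp
    · intro h p hp
      rw [compl_of_bond (hbond p (hτσ hp))]
      exact fun hxp => h ⟨p, hp, hxp⟩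
  have hL0 : ∀ p ∈ τ, ∃ n, p ∈ (chain n).tau := fun p hp => Set.mem_iUnion.mp hp
  have hL1 : ∀ n, (chain n).P ⊆ part := by
    intro n z hz
    rw [hpart]
    intro hzU
    obtain ⟨p, hp, hzp⟩ := Set.mem_iUnion₂.mp hzU
    obtain ⟨m, hm⟩ := hL0 p hp
    have hzM : z ∈ (chain (max n m)).P := hPmono n _ (le_max_left _ _) hz
    exact ((chain (max n m)).Psub hzM) (Set.mem_biUnion (htmono m _ (le_max_right _ _) hm) hzp)
  have hL2 : ∀ p, ∀ n, p ∈ (chain n).tau → att G p ⊆ part := by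
    intro p n hpn b hb
    rw [hpart]
    intro hzU
    obtain ⟨p', hp', hzp'⟩ := Set.mem_iUnion₂.mp hzU
    obtain ⟨m, hm⟩ := hL0 p' hp'
    exact ((chain (max n m)).hatt p (htmono n _ (le_max_left _ _) hpn) hb)
      (Set.mem_biUnion (htmono m _ (le_max_right _ _) hm) hzp')
  have hpart_sub : ∀ p ∈ τ, part ⊆ p.2 := by
    intro p hp
    rw [compl_of_bond (hbond p (hτσ hp))]
    intro z hz hzp
    exact hz (Set.mem_biUnion hp hzp)
  -- connectivity
  refine ⟨τ, hτσ, hτinf, hs0τ, ?_⟩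
  rw [hpart_eq, connected_iff]
  constructor
  · rintro ⟨x, hx⟩ ⟨y, hy⟩
    obtain ⟨w⟩ := hconn.preconnected x y
    refine bridging (I := τ) ?_ ?_ ?_ w ?_ hx hy
    · intro p hp a ha haD
      exact haD (Set.mem_biUnion hp ha)
    · intro p hp p' hp' hne a ha b hb hadj
      have hbatt : b ∈ att G p :=
        ⟨hstar p' (hτσ hp') p (hτσ hp) hne.symm hb, a, ha, hadj⟩
      obtain ⟨n, hn⟩ := hL0 p hp
      exact (hL2 p n hn hbatt) (Set.mem_biUnion hp' hb)
    · intro p hp a ha b hb ⟨a', ha', hadja⟩ ⟨b', hb', hadjb⟩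
      obtain ⟨n, hn⟩ := hL0 p hp
      have haatt : a ∈ att G p := ⟨hpart_sub p hp ha, a', ha', hadja⟩
      have hbatt : b ∈ att G p := ⟨hpart_sub p hp hb, b', hb', hadjb⟩
      obtain ⟨wab, hwab⟩ := (chain n).hwalks p hn a haatt b hbatt
      exact reachable_induce_of_walk wab (fun z hz => hL1 n (hwab z hz)) ha hb
    · intro z _
      by_cases hz : z ∈ part
      · exact Or.inl hz
      · right
        have : z ∈ ⋃ p ∈ τ, p.1 := by
          by_contra h
          exact hz h
        obtain ⟨p, hp, hzp⟩ := Set.mem_iUnion₂.mp this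
        exact ⟨p, hp, hzp⟩
  · obtain ⟨b, hb⟩ := att_nonempty (hbond s₀ hs₀).2.2.1
    refine ⟨⟨b, ?_⟩⟩
    exact hL2 s₀ 0 (chain 0).mem0 hb

end Lemma52

/-- **Lemma 5.2.** If `G` is connected, `σ` is an infinite star of (orientations of)
finite-bond bipartitions of `V(G)` and `s₀ ∈ σ`, then `σ` has an infinite substar `τ`
containing `s₀` whose part `⋂ (A,B) ∈ τ, B` is connected in `G`. -/
theorem infinite_substar_with_connected_part {V : Type u} (G : SimpleGraph V)
    (hconn : G.Connected) (σ : Set (Set V × Set V)) (hinf : σ.Infinite)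
    (hbond : ∀ p ∈ σ, IsFinBondOrientation G p.1 p.2)
    (hstar : ∀ p ∈ σ, ∀ q ∈ σ, p ≠ q → p.1 ⊆ q.2)
    (s₀ : Set V × Set V) (hs₀ : s₀ ∈ σ) :
    ∃ τ ⊆ σ, τ.Infinite ∧ s₀ ∈ τ ∧ (G.induce (⋂ p ∈ τ, p.2)).Connected :=
  Lemma52.main G hconn σ hinf hbond hstar s₀ hs₀
end
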